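/- arXiv:1908.09812 — 12 statements merged into one kernel-verified Lean document; each statement's English description precedes it below -/
import Mathlib

section
/- Let n ≥ 1 and let Ψ be the opinion-update map defined below. For all vectors x, y ∈ ℝⁿ one has ‖Ψ(x) − Ψ(y)‖₁ ≤ (4γ + ‖W‖₁)·‖x − y‖₁, where ‖v‖₁ = Σᵢ |vᵢ| and ‖W‖₁ = maxⱼ Σᵢ |w_ij| is the maximum absolute column sum of W. -/
/-! Expanding `αᵢ`, the `i`-th coordinate of `Ψ x - Ψ y` is
`(W (x - y))ᵢ + γ (|xᵢ - h| - |yᵢ - h|)(sᵢ - h) + γ (|xᵢ - g| - |yᵢ - g|)(sᵢ - g)`.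
The linear part has `ℓ¹`-norm at most `‖W‖₁ ‖x - y‖₁`, and since `t ↦ |t - h|` is `1`-Lipschitz
and `|sᵢ - h| ≤ 1`, each bias term is at most `γ |xᵢ - yᵢ|`; this even gives the constant
`2γ + ‖W‖₁`. -/

open Finset

section MatrixL1

variable {ι κ : Type*} [Fintype ι] [Fintype κ]

theorem sum_abs_sum_mul_le_sum_colSum_mul (W : Matrix ι κ ℝ) (v : κ → ℝ) :
    ∑ i, |∑ j, W i j * v j| ≤ ∑ j, (∑ i, |W i j|) * |v j| :=
  calc ∑ i, |∑ j, W i j * v j|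
      ≤ ∑ i, ∑ j, |W i j| * |v j| :=
        sum_le_sum fun i _ => (abs_sum_le_sum_abs _ _).trans_eq (by simp only [abs_mul])
    _ = ∑ j, (∑ i, |W i j|) * |v j| := by rw [sum_comm]; simp only [sum_mul]

theorem sum_abs_sum_mul_le_sup'_colSum_mul (W : Matrix ι κ ℝ) (hκ : (univ : Finset κ).Nonempty)
    (v : κ → ℝ) :
    ∑ i, |∑ j, W i j * v j| ≤ univ.sup' hκ (fun j => ∑ i, |W i j|) * ∑ j, |v j| :=
  calc ∑ i, |∑ j, W i j * v j|
      ≤ ∑ j, (∑ i, |W i j|) * |v j| := sum_abs_sum_mul_le_sum_colSum_mul W v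
    _ ≤ ∑ j, univ.sup' hκ (fun j => ∑ i, |W i j|) * |v j| :=
        sum_le_sum fun j _ =>
          mul_le_mul_of_nonneg_right (le_sup' (fun j => ∑ i, |W i j|) (mem_univ j)) (abs_nonneg _)
    _ = univ.sup' hκ (fun j => ∑ i, |W i j|) * ∑ j, |v j| := (mul_sum ..).symm

end MatrixL1

theorem abs_mul_abs_sub_mul_sub_le_mul_abs_sub {γ c : ℝ} (hγ : 0 ≤ γ) (hc : |c| ≤ 1)
    (a b h : ℝ) : |γ * |a - h| * c - γ * |b - h| * c| ≤ γ * |a - b| :=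
  calc |γ * |a - h| * c - γ * |b - h| * c|
      = γ * |(|a - h| - |b - h|)| * |c| := by
        rw [← sub_mul, ← mul_sub, abs_mul, abs_mul, abs_of_nonneg hγ]
    _ ≤ γ * |a - b| * 1 := by
        have lip : |(|a - h| - |b - h|)| ≤ |a - b| := by
          simpa using abs_abs_sub_abs_le_abs_sub (a - h) (b - h)
        gcongr
    _ = γ * |a - b| := mul_one _

theorem abs_sub_le_one_of_mem_Icc {a b : ℝ} (ha : a ∈ Set.Icc (0 : ℝ) 1)
    (hb : b ∈ Set.Icc (0 : ℝ) 1) : |a - b| ≤ 1 :=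
  abs_sub_le_of_nonneg_of_le ha.1 ha.2 hb.1 hb.2

theorem stmt_0_general
    (n : ℕ) (hn : 1 ≤ n)
    (W : Matrix (Fin n) (Fin n) ℝ)
    (s : Fin n → ℝ) (hs : ∀ i, s i ∈ Set.Icc (0:ℝ) 1)
    (g h : ℝ) (hg : g ∈ Set.Icc (0:ℝ) 1) (hh : h ∈ Set.Icc (0:ℝ) 1)
    (β γ : ℝ) (hγ0 : 0 ≤ γ)
    (Ψ : (Fin n → ℝ) → (Fin n → ℝ))
    (hΨ : ∀ x : Fin n → ℝ, ∀ i,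
      Ψ x i = (1 - (∑ j, W i j) - 2*β + γ*(|x i - h| + |x i - g|)) * s i
        + (∑ j, W i j * x j) + (β - γ*|x i - h|)*h + (β - γ*|x i - g|)*g)
    (Wnorm : ℝ)
    (hWnorm : Wnorm = Finset.univ.sup' (Finset.univ_nonempty_iff.mpr (Fin.pos_iff_nonempty.mp hn)) (fun j => ∑ i, |W i j|))
    (x y : Fin n → ℝ) :
    (∑ i, |Ψ x i - Ψ y i|) ≤ (4*γ + Wnorm) * ∑ i, |x i - y i| := by
  have coord : ∀ i, |Ψ x i - Ψ y i| ≤ 2 * γ * |x i - y i| + |∑ j, W i j * (x j - y j)| := by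
    intro i
    have split : Ψ x i - Ψ y i
        = (γ * |x i - h| * (s i - h) - γ * |y i - h| * (s i - h))
          + (γ * |x i - g| * (s i - g) - γ * |y i - g| * (s i - g))
          + ∑ j, W i j * (x j - y j) := by
      simp only [hΨ, mul_sub, sum_sub_distrib]
      ring
    have bias_h := abs_mul_abs_sub_mul_sub_le_mul_abs_sub hγ0
      (abs_sub_le_one_of_mem_Icc (hs i) hh) (x i) (y i) h
    have bias_g := abs_mul_abs_sub_mul_sub_le_mul_abs_sub hγ0
      (abs_sub_le_one_of_mem_Icc (hs i) hg) (x i) (y i) g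
    rw [split]
    linarith [abs_add_three (γ * |x i - h| * (s i - h) - γ * |y i - h| * (s i - h))
      (γ * |x i - g| * (s i - g) - γ * |y i - g| * (s i - g)) (∑ j, W i j * (x j - y j))]
  have linear := sum_abs_sum_mul_le_sup'_colSum_mul W
    (univ_nonempty_iff.mpr (Fin.pos_iff_nonempty.mp hn)) (fun j => x j - y j)
  rw [← hWnorm] at linear
  have hdist : 0 ≤ ∑ i, |x i - y i| := sum_nonneg fun i _ => abs_nonneg _
  calc ∑ i, |Ψ x i - Ψ y i|
      ≤ ∑ i, (2 * γ * |x i - y i| + |∑ j, W i j * (x j - y j)|) := sum_le_sum fun i _ => coord i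
    _ = 2 * γ * ∑ i, |x i - y i| + ∑ i, |∑ j, W i j * (x j - y j)| := by
        rw [sum_add_distrib, mul_sum]
    _ ≤ (4 * γ + Wnorm) * ∑ i, |x i - y i| := by nlinarith

theorem stmt_0
    (n : ℕ) (hn : 1 ≤ n)
    (W : Matrix (Fin n) (Fin n) ℝ) (hW : ∀ i j, 0 ≤ W i j)
    (s : Fin n → ℝ) (hs : ∀ i, s i ∈ Set.Icc (0:ℝ) 1)
    (g h : ℝ) (hg : g ∈ Set.Icc (0:ℝ) 1) (hh : h ∈ Set.Icc (0:ℝ) 1)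
    (β γ : ℝ) (hγ0 : 0 ≤ γ) (hγβ : γ ≤ β)
    (Ψ : (Fin n → ℝ) → (Fin n → ℝ))
    (hΨ : ∀ x : Fin n → ℝ, ∀ i,
      Ψ x i = (1 - (∑ j, W i j) - 2*β + γ*(|x i - h| + |x i - g|)) * s i
        + (∑ j, W i j * x j) + (β - γ*|x i - h|)*h + (β - γ*|x i - g|)*g)
    (Wnorm : ℝ)
    (hWnorm : Wnorm = Finset.univ.sup' (Finset.univ_nonempty_iff.mpr (Fin.pos_iff_nonempty.mp hn)) (fun j => ∑ i, |W i j|))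
    (x y : Fin n → ℝ) :
    (∑ i, |Ψ x i - Ψ y i|) ≤ (4*γ + Wnorm) * ∑ i, |x i - y i| :=
  stmt_0_general n hn W s hs g h hg hh β γ hγ0 Ψ hΨ Wnorm hWnorm x y
end

section
/- Suppose 0 ≤ g ≤ h ≤ 1 and x ∈ ℝⁿ satisfies g ≤ xᵢ ≤ h for every i and Ψ(x) = x. Then (I − W + (g − h)γ·I)·x = (I − D − 2β·I + (h − g)γ·I)·s + ((h + g)β + (g² − h²)γ)·𝟙, where D is the diagonal matrix with Dᵢᵢ = Σⱼ w_ij, I is the identity matrix, and 𝟙 is the all-ones vector. (Theorem 1, steady-state formula.) -/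
theorem stmt_2
    (n : ℕ) (hn : 1 ≤ n)
    (W : Matrix (Fin n) (Fin n) ℝ) (hW : ∀ i j, 0 ≤ W i j)
    (s : Fin n → ℝ) (hs : ∀ i, s i ∈ Set.Icc (0:ℝ) 1)
    (g h : ℝ) (hg : g ∈ Set.Icc (0:ℝ) 1) (hh : h ∈ Set.Icc (0:ℝ) 1)
    (β γ : ℝ) (hγ0 : 0 ≤ γ) (hγβ : γ ≤ β)
    (Ψ : (Fin n → ℝ) → (Fin n → ℝ))
    (hΨ : ∀ x : Fin n → ℝ, ∀ i,
      Ψ x i = (1 - (∑ j, W i j) - 2*β + γ*(|x i - h| + |x i - g|)) * s i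
        + (∑ j, W i j * x j) + (β - γ*|x i - h|)*h + (β - γ*|x i - g|)*g)
    (hgh : g ≤ h)
    (x : Fin n → ℝ) (hx : ∀ i, g ≤ x i ∧ x i ≤ h) (hfix : Ψ x = x) :
    ((1 : Matrix (Fin n) (Fin n) ℝ) - W + ((g - h)*γ) • (1 : Matrix (Fin n) (Fin n) ℝ)).mulVec x
      = ((1 : Matrix (Fin n) (Fin n) ℝ) - Matrix.diagonal (fun i => ∑ j, W i j)
            - (2*β) • (1 : Matrix (Fin n) (Fin n) ℝ)
            + ((h - g)*γ) • (1 : Matrix (Fin n) (Fin n) ℝ)).mulVec s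
        + ((h + g)*β + (g^2 - h^2)*γ) • (fun _ => (1:ℝ)) := by
  funext i
  have hfi : Ψ x i = x i := congrFun hfix i
  rw [hΨ] at hfi
  have h1 : |x i - h| = h - x i := by
    rw [abs_of_nonpos (by linarith [(hx i).2])]; ring
  have h2 : |x i - g| = x i - g := abs_of_nonneg (by linarith [(hx i).1])
  rw [h1, h2] at hfi
  rw [Matrix.add_mulVec, Matrix.sub_mulVec, Matrix.smul_mulVec, Matrix.one_mulVec,
    Matrix.add_mulVec, Matrix.sub_mulVec, Matrix.sub_mulVec, Matrix.smul_mulVec,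
    Matrix.smul_mulVec, Matrix.one_mulVec]
  simp only [Pi.add_apply, Pi.sub_apply, Pi.smul_apply, smul_eq_mul,
    Matrix.mulVec_diagonal]
  simp only [Matrix.mulVec, dotProduct]
  linarith [hfi]
end

section
/- Suppose the matrix E = I − W + (g − h)γ·I is invertible, 1 − λ + (g − h)γ ≠ 0, Wᵀc = λc, and every entry of c is positive. Let x* = E⁻¹·[(I − D − 2β·I + (h − g)γ·I)·s + ((h + g)β + (g² − h²)γ)·𝟙]. Then cᵀx* = C·((1 − 2β + (h − g)γ)·ŝ − χ + (h + g)β + (g² − h²)γ) / (1 − λ + (g − h)γ). (Corollary 1.) -/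
theorem stmt_5
    (n : ℕ)
    (W : Matrix (Fin n) (Fin n) ℝ)
    (c : Fin n → ℝ) (hc : ∀ i, 0 < c i)
    (lam β γ g h : ℝ)
    (hWc : W.transpose.mulVec c = lam • c)
    (s : Fin n → ℝ)
    (E : Matrix (Fin n) (Fin n) ℝ)
    (hE : E = (1 : Matrix (Fin n) (Fin n) ℝ) - W + ((g - h)*γ) • (1 : Matrix (Fin n) (Fin n) ℝ))
    (hEdet : IsUnit E.det)
    (hden : 1 - lam + (g - h)*γ ≠ 0)
    (Cc shat chi : ℝ)
    (hCc : Cc = ∑ i, c i)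
    (hshat : shat = ∑ i, (c i / Cc) * s i)
    (hchi : chi = ∑ i, (c i / Cc) * s i * (∑ j, W i j))
    (xstar : Fin n → ℝ)
    (hx : xstar = E⁻¹.mulVec
      (((1 : Matrix (Fin n) (Fin n) ℝ) - Matrix.diagonal (fun i => ∑ j, W i j)
          - (2*β) • (1 : Matrix (Fin n) (Fin n) ℝ)
          + ((h - g)*γ) • (1 : Matrix (Fin n) (Fin n) ℝ)).mulVec s
        + ((h + g)*β + (g^2 - h^2)*γ) • (fun _ => (1:ℝ)))) :
    (∑ i, c i * xstar i)
      = Cc * ((1 - 2*β + (h - g)*γ)*shat - chi + (h + g)*β + (g^2 - h^2)*γ)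
          / (1 - lam + (g - h)*γ) := by
  by_cases hn : Nonempty (Fin n)
  case neg =>
    have he : (Finset.univ : Finset (Fin n)) = ∅ := by
      simp [Finset.univ_eq_empty_iff.2 (not_nonempty_iff.1 hn)]
    simp [he] at hCc ⊢
    simp [hCc]
  case pos =>
    set k : ℝ := 1 - lam + (g - h)*γ with hk
    have hCpos : 0 < Cc := by
      rw [hCc]; exact Finset.sum_pos (fun i _ => hc i) Finset.univ_nonempty
    have hCne : Cc ≠ 0 := ne_of_gt hCpos
    -- c as a left eigenvector of E
    have hcW : Matrix.vecMul c W = lam • c := by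
      rw [← Matrix.mulVec_transpose]; exact hWc
    have hsm : Matrix.vecMul c (((g - h)*γ) • (1 : Matrix (Fin n) (Fin n) ℝ))
        = ((g - h)*γ) • c := by
      funext i
      simp [Matrix.vecMul, dotProduct, Matrix.one_apply, mul_ite,
        Finset.sum_ite_eq, mul_comm]
    have hcE : Matrix.vecMul c E = k • c := by
      rw [hE, Matrix.vecMul_add, Matrix.vecMul_sub, Matrix.vecMul_one, hsm, hcW]
      funext i
      simp [hk]
      ring
    have hcEinv : Matrix.vecMul c E⁻¹ = k⁻¹ • c := by
      have h1 : Matrix.vecMul (Matrix.vecMul c E) E⁻¹ = c := by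
        rw [Matrix.vecMul_vecMul, Matrix.mul_nonsing_inv E hEdet, Matrix.vecMul_one]
      rw [hcE, Matrix.smul_vecMul] at h1
      funext i
      have h2 := congrFun h1 i
      simp only [Pi.smul_apply, smul_eq_mul] at h2 ⊢
      rw [← h2, inv_mul_cancel_left₀ hden]
    set r : ℝ := (h + g)*β + (g^2 - h^2)*γ with hr
    set u : ℝ := 1 - 2*β + (h - g)*γ with hu
    set b : Fin n → ℝ := (((1 : Matrix (Fin n) (Fin n) ℝ) - Matrix.diagonal (fun i => ∑ j, W i j)
          - (2*β) • (1 : Matrix (Fin n) (Fin n) ℝ)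
          + ((h - g)*γ) • (1 : Matrix (Fin n) (Fin n) ℝ)).mulVec s
        + ((h + g)*β + (g^2 - h^2)*γ) • (fun _ => (1:ℝ))) with hb
    have hbi : ∀ i, b i = u * s i - (∑ j, W i j) * s i + r := by
      intro i
      simp [hb, Matrix.add_mulVec, Matrix.sub_mulVec, Matrix.smul_mulVec,
        Matrix.mulVec_diagonal, Matrix.one_mulVec, hu, hr]
      ring
    have hdot : (∑ i, c i * xstar i) = k⁻¹ * (∑ i, c i * b i) := by
      have : (∑ i, c i * xstar i) = dotProduct c xstar := rfl
      rw [this, hx, Matrix.dotProduct_mulVec, hcEinv, smul_dotProduct]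
      simp [dotProduct, Finset.mul_sum, smul_eq_mul]
    have hS1 : Cc * shat = ∑ i, c i * s i := by
      rw [hshat, Finset.mul_sum]
      exact Finset.sum_congr rfl (fun i _ => by field_simp)
    have hS2 : Cc * chi = ∑ i, c i * s i * (∑ j, W i j) := by
      rw [hchi, Finset.mul_sum]
      exact Finset.sum_congr rfl (fun i _ => by field_simp)
    have hsum : (∑ i, c i * b i) = u * (Cc * shat) - (Cc * chi) + Cc * r := by
      rw [hS1, hS2, hCc, Finset.mul_sum, Finset.sum_mul, ← Finset.sum_sub_distrib,
        ← Finset.sum_add_distrib]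
      exact Finset.sum_congr rfl (fun i _ => by rw [hbi i]; ring)
    rw [hdot, hsum, eq_div_iff hden, hr, hu]
    field_simp
    ring
end

section
/- For all real numbers g, g′, h, h′ with 0 ≤ g′ ≤ g ≤ 1 and 0 ≤ h ≤ h′ ≤ 1, one has m(g, h) ≥ m(g′, h′) and q(g, h) ≥ q(g′, h′); that is, both m and q are nondecreasing in the first argument and nonincreasing in the second argument on [0,1] × [0,1]. -/
theorem stmt_6
    (lam shat chi β γ : ℝ)
    (hlam0 : 0 ≤ lam) (hlam1 : lam < 1)
    (hγ0 : 0 ≤ γ) (hγβ : γ ≤ β)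
    (h2β : 2*β ≤ 1 - lam) (h4γ : 4*γ ≤ 1 - lam)
    (hshat0 : 0 ≤ shat) (hshat1 : shat ≤ 1)
    (hchi0 : 0 ≤ chi) (hchi1 : chi ≤ shat)
    (q m : ℝ → ℝ → ℝ)
    (hq : ∀ g h, q g h = (β + γ*shat - 2*γ*h)*(1 - lam + γ*g)
        + ((1 - 2*β - g*γ)*shat - chi + g*β + g^2*γ)*γ + γ^2*h^2)
    (hm : ∀ g h, m g h = (β - γ*shat + 2*γ*g)*(1 - lam - h*γ) + g^2*γ^2
        - ((1 - 2*β + h*γ)*shat + h*β - h^2*γ - chi)*γ)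
    (g g' h h' : ℝ)
    (hg'0 : 0 ≤ g') (hg'g : g' ≤ g) (hg1 : g ≤ 1)
    (hh0 : 0 ≤ h) (hhh' : h ≤ h') (hh'1 : h' ≤ 1) :
    m g' h' ≤ m g h ∧ q g' h' ≤ q g h := by
  have hg0 : 0 ≤ g := le_trans hg'0 hg'g
  have hh'0 : 0 ≤ h' := le_trans hh0 hhh'
  have hh1 : h ≤ 1 := le_trans hhh' hh'1
  have hg'1 : g' ≤ 1 := le_trans hg'g hg1
  have e1 : 0 ≤ γ * (g - g') * (2*(1 - lam - h*γ) + γ*(g + g')) := by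
    apply mul_nonneg (mul_nonneg hγ0 (by linarith))
    nlinarith [mul_le_mul_of_nonneg_left hh1 hγ0]
  have e2 : 0 ≤ γ * (h' - h) * (2*β + 2*γ*g' - γ*(h + h')) := by
    apply mul_nonneg (mul_nonneg hγ0 (by linarith))
    nlinarith [mul_nonneg hγ0 hg'0]
  have e3 : 0 ≤ γ * (g - g') * (2*β - 2*γ*h + γ*(g + g')) := by
    apply mul_nonneg (mul_nonneg hγ0 (by linarith))
    nlinarith [mul_nonneg hγ0 hg0, mul_nonneg hγ0 hg'0]
  have e4 : 0 ≤ γ * (h' - h) * (2*(1 - lam + γ*g') - γ*(h + h')) := by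
    apply mul_nonneg (mul_nonneg hγ0 (by linarith))
    nlinarith [mul_nonneg hγ0 hg'0]
  constructor
  · rw [hm, hm]; nlinarith [e1, e2]
  · rw [hq, hq]; nlinarith [e3, e4]
end

section
/- If 0 ≤ g̃ ≤ g ≤ 1, 0 ≤ h̃ ≤ h ≤ 1, q(g, h) ≥ 0, and m(g̃, h̃) ≥ 0, then f(g, h) ≥ f(g̃, h̃). (Appendix Lemma 4.) -/
theorem stmt_8
    (lam shat chi β γ : ℝ)
    (hlam0 : 0 ≤ lam) (hlam1 : lam < 1)
    (hγ0 : 0 ≤ γ) (hγβ : γ ≤ β)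
    (h2β : 2*β ≤ 1 - lam) (h4γ : 4*γ ≤ 1 - lam)
    (hshat0 : 0 ≤ shat) (hshat1 : shat ≤ 1)
    (hchi0 : 0 ≤ chi) (hchi1 : chi ≤ shat)
    (q m : ℝ → ℝ → ℝ)
    (hq : ∀ g h, q g h = (β + γ*shat - 2*γ*h)*(1 - lam + γ*g)
        + ((1 - 2*β - g*γ)*shat - chi + g*β + g^2*γ)*γ + γ^2*h^2)
    (hm : ∀ g h, m g h = (β - γ*shat + 2*γ*g)*(1 - lam - h*γ) + g^2*γ^2
        - ((1 - 2*β + h*γ)*shat + h*β - h^2*γ - chi)*γ)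
    (C : ℝ) (hC : 0 < C)
    (f : ℝ → ℝ → ℝ)
    (hf : ∀ g h, f g h = C * ((1 - 2*β + (h - g)*γ)*shat - chi + (h + g)*β + (g^2 - h^2)*γ)
        / (1 - lam + (g - h)*γ))
    (g gt h ht : ℝ)
    (hgt0 : 0 ≤ gt) (hgtg : gt ≤ g) (hg1 : g ≤ 1)
    (hht0 : 0 ≤ ht) (hhth : ht ≤ h) (hh1 : h ≤ 1)
    (hqnn : 0 ≤ q g h) (hmnn : 0 ≤ m gt ht) :
    f gt ht ≤ f g h := by
  have hD : ∀ a b : ℝ, 0 ≤ a → b ≤ 1 → 0 < 1 - lam + (a - b)*γ := by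
    intro a b ha hb
    nlinarith [mul_nonneg (by linarith : (0:ℝ) ≤ a - b + 1) hγ0]
  rw [hq] at hqnn
  rw [hm] at hmnn
  have hg0 : 0 ≤ g := le_trans hgt0 hgtg
  have hht1 : ht ≤ 1 := le_trans hhth hh1
  have step1 : f gt ht ≤ f g ht := by
    rw [hf, hf, div_le_div_iff₀ (hD gt ht hgt0 hht1) (hD g ht hg0 hht1)]
    nlinarith [mul_nonneg (mul_nonneg hC.le (by linarith : (0:ℝ) ≤ g - gt)) hmnn,
      mul_nonneg (mul_nonneg (mul_nonneg hC.le hγ0) (sq_nonneg (g - gt)))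
        (hD gt ht hgt0 hht1).le]
  have step2 : f g ht ≤ f g h := by
    rw [hf, hf, div_le_div_iff₀ (hD g ht hg0 hht1) (hD g h hg0 hh1)]
    nlinarith [mul_nonneg (mul_nonneg hC.le (by linarith : (0:ℝ) ≤ h - ht)) hqnn,
      mul_nonneg (mul_nonneg (mul_nonneg hC.le hγ0) (sq_nonneg (h - ht)))
        (hD g h hg0 hh1).le]
  linarith
end

section
/- Assume in addition that β > 0. Then there exists a unique pure Nash equilibrium, i.e., a unique pair (g*, h*) ∈ [0, s̲] × [s̄, 1] such that f(g*, h) ≤ f(g*, h*) for every h ∈ [s̄, 1] and f(g*, h*) ≤ f(g, h*) for every g ∈ [0, s̲]. (Theorem 2.) -/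
/-!
Write `D = 1 - λ + (g - h)γ` for the denominator, which stays positive because testing `Wᵀc = λc`
against the positive vector `c` gives `λ ≤ ‖W‖∞`. For `γ > 0`, dividing the quadratic numerator by
`D` gives `γ f(g, h) = C (κ(g) - (D + M(g) / D)) = C (D + M'(h) / D + κ'(h))`. As `D` is an affine
bijection in each variable, each player minimises `u ↦ u + M / u` over an interval of positive `u`,
and the unique minimiser is `√M` clamped to that interval. The best replies are therefore unique and
continuous, their composition has a fixed point on `[0, s̲]`, and it yields a saddle point of `f`.
Saddle points are interchangeable, so unique best replies make it the only one. For `γ = 0` the cost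
is strictly increasing in both variables and `(0, 1)` is the equilibrium.
-/

open Set

section SaddlePoint

variable {X Y : Type*}

def IsSaddlePoint (f : X → Y → ℝ) (S : Set X) (T : Set Y) (a : X) (b : Y) : Prop :=
  a ∈ S ∧ b ∈ T ∧ (∀ b' ∈ T, f a b' ≤ f a b) ∧ (∀ a' ∈ S, f a b ≤ f a' b)

variable {f : X → Y → ℝ} {S : Set X} {T : Set Y} {a₁ a₂ : X} {b₁ b₂ : Y}

theorem IsSaddlePoint.interchange (h₁ : IsSaddlePoint f S T a₁ b₁)
    (h₂ : IsSaddlePoint f S T a₂ b₂) : IsSaddlePoint f S T a₁ b₂ := by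
  obtain ⟨ha₁, hb₁, hmax₁, hmin₁⟩ := h₁
  obtain ⟨ha₂, hb₂, hmax₂, hmin₂⟩ := h₂
  have hb : f a₁ b₁ ≤ f a₁ b₂ := (hmin₁ a₂ ha₂).trans ((hmax₂ b₁ hb₁).trans (hmin₂ a₁ ha₁))
  have ha : f a₁ b₂ ≤ f a₂ b₂ := (hmax₁ b₂ hb₂).trans ((hmin₁ a₂ ha₂).trans (hmax₂ b₁ hb₁))
  exact ⟨ha₁, hb₂, fun b hb' => (hmax₁ b hb').trans hb, fun a ha' => ha.trans (hmin₂ a ha')⟩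

theorem existsUnique_isSaddlePoint (G : Y → X) (H : X → Y)
    (hH : ∀ a ∈ S, H a ∈ T ∧ ∀ b ∈ T, b ≠ H a → f a b < f a (H a))
    (hG : ∀ b ∈ T, G b ∈ S ∧ ∀ a ∈ S, a ≠ G b → f (G b) b < f a b)
    (hfix : ∃ a ∈ S, G (H a) = a) :
    ∃! p : X × Y, IsSaddlePoint f S T p.1 p.2 := by
  have eq_H {a b} (h : IsSaddlePoint f S T a b) : b = H a := by
    by_contra hne
    exact (h.2.2.1 _ (hH a h.1).1).not_gt ((hH a h.1).2 b h.2.1 hne)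
  have eq_G {a b} (h : IsSaddlePoint f S T a b) : a = G b := by
    by_contra hne
    exact (h.2.2.2 _ (hG b h.2.1).1).not_gt ((hG b h.2.1).2 a h.1 hne)
  obtain ⟨a, ha, hfix⟩ := hfix
  have hsaddle : IsSaddlePoint f S T a (H a) := by
    refine ⟨ha, (hH a ha).1, fun b hb => ?_, fun a' ha' => ?_⟩
    · rcases eq_or_ne b (H a) with rfl | hne
      exacts [le_rfl, ((hH a ha).2 b hb hne).le]
    · rcases eq_or_ne a' a with rfl | hne
      · exact le_rfl
      · have hlt := (hG (H a) (hH a ha).1).2 a' ha' (by rwa [hfix])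
        rw [hfix] at hlt
        exact hlt.le
  refine ⟨(a, H a), hsaddle, ?_⟩
  rintro ⟨a', b'⟩ (h : IsSaddlePoint f S T a' b')
  have hb : b' = H a := eq_H (hsaddle.interchange h)
  have ha' : a' = a := by rw [eq_G h, hb, hfix]
  rw [ha', hb]

end SaddlePoint

/-- For `M ≤ 0` we have `√M = 0`, so the clamp returns `p`, where `u ↦ u + M / u` is increasing. -/
noncomputable def clampSqrt (p q M : ℝ) : ℝ := max p (min q √M)

theorem clampSqrt_mem {p q : ℝ} (M : ℝ) (h : p ≤ q) : clampSqrt p q M ∈ Icc p q :=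
  ⟨le_max_left _ _, max_le h (min_le_left _ _)⟩

theorem add_div_clampSqrt_lt {p q M u : ℝ} (hp : 0 < p) (hu : u ∈ Icc p q)
    (hne : u ≠ clampSqrt p q M) : clampSqrt p q M + M / clampSqrt p q M < u + M / u := by
  set m := clampSqrt p q M with hm_def
  have hm : 0 < m := hp.trans_le (le_max_left _ _)
  have hu0 : 0 < u := hp.trans_le hu.1
  have key : u + M / u - (m + M / m) = (u - m) * (u * m - M) / (u * m) := by
    field_simp; ring
  suffices 0 < (u - m) * (u * m - M) from sub_pos.mp (key ▸ div_pos this (mul_pos hu0 hm))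
  rcases hne.lt_or_gt with hlt | hgt
  · have hsqrt : m ≤ √M := by
      have : p < m := hu.1.trans_lt hlt
      rw [hm_def, clampSqrt] at this ⊢
      grind
    have hM : M = √M * √M := (Real.mul_self_sqrt (Real.sqrt_pos.mp (hm.trans_le hsqrt)).le).symm
    apply mul_pos_of_neg_of_neg (by linarith)
    nlinarith
  · have hsqrt : √M ≤ m := by
      have : m < q := hgt.trans_le hu.2
      rw [hm_def, clampSqrt] at this ⊢
      grind
    have hM : M ≤ √M * √M := by rw [← sq, Real.sq_sqrt']; exact le_max_left _ _
    apply mul_pos (by linarith)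
    nlinarith [Real.sqrt_nonneg M]

section Game

variable (C lam β γ shat chi : ℝ)

def denom (g h : ℝ) : ℝ := 1 - lam + (g - h) * γ

noncomputable def cost (g h : ℝ) : ℝ :=
  C * ((1 - 2*β + (h - g)*γ)*shat - chi + (h + g)*β + (g^2 - h^2)*γ) / denom lam γ g h

def radicandH (g : ℝ) : ℝ := (1 - lam - β) * (1 - lam + 2*g*γ) - γ * ((2 - lam - 2*β)*shat - chi)

def radicandG (h : ℝ) : ℝ := (1 - lam - β) * (1 - lam - 2*h*γ) + γ * ((2 - lam - 2*β)*shat - chi)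

noncomputable def bestReplyH (shi g : ℝ) : ℝ :=
  g + (1 - lam - clampSqrt (denom lam γ g 1) (denom lam γ g shi) (radicandH lam β γ shat chi g)) / γ

noncomputable def bestReplyG (slo h : ℝ) : ℝ :=
  h + (clampSqrt (denom lam γ 0 h) (denom lam γ slo h) (radicandG lam β γ shat chi h) - (1 - lam))
    / γ

variable {C lam β γ shat chi}

theorem denom_pos {g h : ℝ} (hγ : 0 ≤ γ) (hγl : γ < 1 - lam) (hg : 0 ≤ g) (hh : h ≤ 1) :
    0 < denom lam γ g h := by
  unfold denom
  nlinarith [mul_nonneg hγ (by linarith : 0 ≤ g + (1 - h))]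

theorem mul_cost_eq_sub_add_div {g h : ℝ} (hD : denom lam γ g h ≠ 0) :
    γ * cost C lam β γ shat chi g h = C * (2 * (1 - lam + g*γ) - (γ*shat + β) -
      (denom lam γ g h + radicandH lam β γ shat chi g / denom lam γ g h)) := by
  unfold cost radicandH
  field_simp
  unfold denom
  ring

theorem mul_cost_eq_add_add_div {g h : ℝ} (hD : denom lam γ g h ≠ 0) :
    γ * cost C lam β γ shat chi g h = C * (denom lam γ g h +
      radicandG lam β γ shat chi h / denom lam γ g h + (β - γ*shat - 2 * (1 - lam - h*γ))) := by
  unfold cost radicandG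
  field_simp
  unfold denom
  ring

theorem denom_le_denom_right_iff {g h h' : ℝ} (hγ : 0 < γ) :
    denom lam γ g h ≤ denom lam γ g h' ↔ h' ≤ h := by
  unfold denom; constructor <;> intro hle <;> nlinarith

theorem denom_le_denom_left_iff {g g' h : ℝ} (hγ : 0 < γ) :
    denom lam γ g h ≤ denom lam γ g' h ↔ g ≤ g' := by
  unfold denom; constructor <;> intro hle <;> nlinarith

theorem denom_right_injective {g : ℝ} (hγ : γ ≠ 0) : Function.Injective (denom lam γ g) := by
  intro h h' e
  unfold denom at e
  exact mul_right_cancel₀ hγ (by linarith)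

theorem denom_left_injective {h : ℝ} (hγ : γ ≠ 0) : Function.Injective (denom lam γ · h) := by
  intro g g' e
  simp only [denom] at e
  exact mul_right_cancel₀ hγ (by linarith)

theorem denom_bestReplyH {shi g : ℝ} (hγ : γ ≠ 0) :
    denom lam γ g (bestReplyH lam β γ shat chi shi g) =
      clampSqrt (denom lam γ g 1) (denom lam γ g shi) (radicandH lam β γ shat chi g) := by
  unfold bestReplyH
  generalize clampSqrt _ _ _ = m
  unfold denom; field_simp; ring

theorem denom_bestReplyG {slo h : ℝ} (hγ : γ ≠ 0) :
    denom lam γ (bestReplyG lam β γ shat chi slo h) h =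
      clampSqrt (denom lam γ 0 h) (denom lam γ slo h) (radicandG lam β γ shat chi h) := by
  unfold bestReplyG
  generalize clampSqrt _ _ _ = m
  unfold denom; field_simp; ring

theorem bestReplyH_spec {shi g : ℝ} (hC : 0 < C) (hγ : 0 < γ) (hγl : γ < 1 - lam)
    (hshi : shi ≤ 1) (hg : 0 ≤ g) :
    bestReplyH lam β γ shat chi shi g ∈ Icc shi 1 ∧ ∀ h ∈ Icc shi 1,
      h ≠ bestReplyH lam β γ shat chi shi g →
        cost C lam β γ shat chi g h <
          cost C lam β γ shat chi g (bestReplyH lam β γ shat chi shi g) := by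
  set H := bestReplyH lam β γ shat chi shi g
  have hD : denom lam γ g H = _ := denom_bestReplyH hγ.ne'
  have hm : denom lam γ g H ∈ Icc (denom lam γ g 1) (denom lam γ g shi) :=
    hD ▸ clampSqrt_mem _ ((denom_le_denom_right_iff hγ).2 hshi)
  have hH : H ∈ Icc shi 1 :=
    ⟨(denom_le_denom_right_iff hγ).1 hm.2, (denom_le_denom_right_iff hγ).1 hm.1⟩
  refine ⟨hH, fun h hh hne => ?_⟩
  have hu : denom lam γ g h ∈ Icc (denom lam γ g 1) (denom lam γ g shi) :=
    ⟨(denom_le_denom_right_iff hγ).2 hh.2, (denom_le_denom_right_iff hγ).2 hh.1⟩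
  have hlt := add_div_clampSqrt_lt (denom_pos hγ.le hγl hg le_rfl) hu
    (hD ▸ (denom_right_injective hγ.ne').ne hne)
  rw [← hD] at hlt
  refine lt_of_mul_lt_mul_left ?_ hγ.le
  rw [mul_cost_eq_sub_add_div (denom_pos hγ.le hγl hg hh.2).ne',
    mul_cost_eq_sub_add_div (denom_pos hγ.le hγl hg hH.2).ne']
  gcongr

theorem bestReplyG_spec {slo h : ℝ} (hC : 0 < C) (hγ : 0 < γ) (hγl : γ < 1 - lam)
    (hslo : 0 ≤ slo) (hh : h ≤ 1) :
    bestReplyG lam β γ shat chi slo h ∈ Icc 0 slo ∧ ∀ g ∈ Icc 0 slo,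
      g ≠ bestReplyG lam β γ shat chi slo h →
        cost C lam β γ shat chi (bestReplyG lam β γ shat chi slo h) h <
          cost C lam β γ shat chi g h := by
  set G := bestReplyG lam β γ shat chi slo h
  have hD : denom lam γ G h = _ := denom_bestReplyG hγ.ne'
  have hm : denom lam γ G h ∈ Icc (denom lam γ 0 h) (denom lam γ slo h) :=
    hD ▸ clampSqrt_mem _ ((denom_le_denom_left_iff hγ).2 hslo)
  have hG : G ∈ Icc 0 slo :=
    ⟨(denom_le_denom_left_iff hγ).1 hm.1, (denom_le_denom_left_iff hγ).1 hm.2⟩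
  refine ⟨hG, fun g hg hne => ?_⟩
  have hu : denom lam γ g h ∈ Icc (denom lam γ 0 h) (denom lam γ slo h) :=
    ⟨(denom_le_denom_left_iff hγ).2 hg.1, (denom_le_denom_left_iff hγ).2 hg.2⟩
  have hlt := add_div_clampSqrt_lt (denom_pos hγ.le hγl le_rfl hh) hu
    (hD ▸ (denom_left_injective hγ.ne').ne hne)
  rw [← hD] at hlt
  refine lt_of_mul_lt_mul_left ?_ hγ.le
  rw [mul_cost_eq_add_add_div (denom_pos hγ.le hγl hg.1 hh).ne',
    mul_cost_eq_add_add_div (denom_pos hγ.le hγl hG.1 hh).ne']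
  gcongr

theorem continuous_bestReplyH (shi : ℝ) : Continuous (bestReplyH lam β γ shat chi shi) := by
  unfold bestReplyH clampSqrt denom radicandH
  fun_prop

theorem continuous_bestReplyG (slo : ℝ) : Continuous (bestReplyG lam β γ shat chi slo) := by
  unfold bestReplyG clampSqrt denom radicandG
  fun_prop

variable {slo shi : ℝ}

theorem existsUnique_isSaddlePoint_cost_of_pos (hC : 0 < C) (hγ : 0 < γ) (hγl : γ < 1 - lam)
    (hslo : 0 ≤ slo) (hshi : shi ≤ 1) :
    ∃! p : ℝ × ℝ, IsSaddlePoint (cost C lam β γ shat chi) (Icc 0 slo) (Icc shi 1) p.1 p.2 := by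
  refine existsUnique_isSaddlePoint (bestReplyG lam β γ shat chi slo)
    (bestReplyH lam β γ shat chi shi) (fun g hg => bestReplyH_spec hC hγ hγl hshi hg.1)
    (fun h hh => bestReplyG_spec hC hγ hγl hslo hh.2) ?_
  exact exists_mem_Icc_isFixedPt_of_mapsTo
    ((continuous_bestReplyG slo).comp (continuous_bestReplyH shi)).continuousOn hslo
    fun g hg => (bestReplyG_spec hC hγ hγl hslo (bestReplyH_spec hC hγ hγl hshi hg.1).1.2).1

theorem existsUnique_isSaddlePoint_cost_of_eq_zero (hC : 0 < C) (hβ : 0 < β) (hlam : lam < 1)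
    (hslo : 0 ≤ slo) (hshi : shi ≤ 1) :
    ∃! p : ℝ × ℝ, IsSaddlePoint (cost C lam β 0 shat chi) (Icc 0 slo) (Icc shi 1) p.1 p.2 := by
  refine existsUnique_isSaddlePoint (fun _ => 0) (fun _ => 1)
    (fun g _ => ⟨⟨hshi, le_rfl⟩, fun h hh hne => ?_⟩)
    (fun h _ => ⟨⟨le_rfl, hslo⟩, fun g hg hne => ?_⟩) ⟨0, ⟨le_rfl, hslo⟩, rfl⟩
  · have : h < 1 := lt_of_le_of_ne hh.2 hne
    simp only [cost, denom, mul_zero, add_zero]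
    gcongr
  · have : 0 < g := lt_of_le_of_ne hg.1 (Ne.symm hne)
    simp only [cost, denom, mul_zero, add_zero]
    gcongr
    linarith

theorem existsUnique_isSaddlePoint_cost (hC : 0 < C) (hβ : 0 < β) (hγ : 0 ≤ γ)
    (hγl : γ < 1 - lam) (hslo : 0 ≤ slo) (hshi : shi ≤ 1) :
    ∃! p : ℝ × ℝ, IsSaddlePoint (cost C lam β γ shat chi) (Icc 0 slo) (Icc shi 1) p.1 p.2 := by
  rcases hγ.eq_or_lt with rfl | hγ
  · exact existsUnique_isSaddlePoint_cost_of_eq_zero hC hβ (by linarith) hslo hshi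
  · exact existsUnique_isSaddlePoint_cost_of_pos hC hγ hγl hslo hshi

end Game

theorem le_sup'_sum_abs_of_transpose_mulVec_eq_smul {ι : Type*} [Fintype ι]
    (hne : (Finset.univ : Finset ι).Nonempty) {W : Matrix ι ι ℝ} {c : ι → ℝ} {lam : ℝ}
    (hc : ∀ i, 0 < c i) (hWc : W.transpose.mulVec c = lam • c) :
    lam ≤ Finset.univ.sup' hne (fun i => ∑ j, |W i j|) := by
  have hsum : lam * ∑ j, c j = ∑ i, (∑ j, W i j) * c i :=
    calc lam * ∑ j, c j = ∑ j, W.transpose.mulVec c j := by simp [hWc, Finset.mul_sum]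
    _ = ∑ i, (∑ j, W i j) * c i := by
      simp only [Matrix.mulVec, dotProduct, Matrix.transpose_apply, Finset.sum_mul]
      exact Finset.sum_comm
  refine le_of_mul_le_mul_right ?_ (Finset.sum_pos (fun i _ => hc i) hne)
  rw [hsum, Finset.mul_sum]
  refine Finset.sum_le_sum fun i _ => mul_le_mul_of_nonneg_right ?_ (hc i).le
  exact (Finset.sum_le_sum fun j _ => le_abs_self (W i j)).trans
    (Finset.le_sup' (fun i => ∑ j, |W i j|) (Finset.mem_univ i))

theorem stmt_11_general
    (n : ℕ) (hn : 1 ≤ n)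
    (W : Matrix (Fin n) (Fin n) ℝ)
    (c : Fin n → ℝ) (hc : ∀ i, 0 < c i)
    (lam : ℝ)
    (hWc : W.transpose.mulVec c = lam • c)
    (s : Fin n → ℝ) (hs : ∀ i, s i ∈ Set.Icc (0:ℝ) 1)
    (β γ : ℝ) (hγ0 : 0 ≤ γ)
    (hnorm : max (2*β) (4*γ) ≤ 1 -
      max (Finset.univ.sup' (Finset.univ_nonempty_iff.mpr (Fin.pos_iff_nonempty.mp hn)) (fun i => ∑ j, |W i j|))
          (Finset.univ.sup' (Finset.univ_nonempty_iff.mpr (Fin.pos_iff_nonempty.mp hn)) (fun j => ∑ i, |W i j|)))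
    (slo shi : ℝ)
    (hslo : slo = Finset.univ.inf' (Finset.univ_nonempty_iff.mpr (Fin.pos_iff_nonempty.mp hn)) s)
    (hshi : shi = Finset.univ.sup' (Finset.univ_nonempty_iff.mpr (Fin.pos_iff_nonempty.mp hn)) s)
    (Cc shat chi : ℝ)
    (hCc : Cc = ∑ i, c i)
    (f : ℝ → ℝ → ℝ)
    (hf : ∀ g h, f g h = Cc * ((1 - 2*β + (h - g)*γ)*shat - chi + (h + g)*β + (g^2 - h^2)*γ)
        / (1 - lam + (g - h)*γ))
    (isNE : ℝ → ℝ → Prop)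
    (hisNE : ∀ a b, isNE a b ↔ (a ∈ Set.Icc (0:ℝ) slo ∧ b ∈ Set.Icc shi 1 ∧
      (∀ h ∈ Set.Icc shi 1, f a h ≤ f a b) ∧ (∀ g ∈ Set.Icc (0:ℝ) slo, f a b ≤ f g b)))
    (hβpos : 0 < β) :
    ∃! p : ℝ × ℝ, isNE p.1 p.2 := by
  have hne : (Finset.univ : Finset (Fin n)).Nonempty :=
    Finset.univ_nonempty_iff.mpr (Fin.pos_iff_nonempty.mp hn)
  have hC : 0 < Cc := hCc ▸ Finset.sum_pos (fun i _ => hc i) hne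
  have hslo0 : 0 ≤ slo := hslo ▸ Finset.le_inf' _ _ fun i _ => (hs i).1
  have hshi1 : shi ≤ 1 := hshi ▸ Finset.sup'_le _ _ fun i _ => (hs i).2
  have hlam := le_sup'_sum_abs_of_transpose_mulVec_eq_smul hne hc hWc
  have hγl : γ < 1 - lam := by
    linarith [le_max_left (2*β) (4*γ), le_max_right (2*β) (4*γ),
      le_max_left (Finset.univ.sup' hne fun i => ∑ j, |W i j|)
        (Finset.univ.sup' hne fun j => ∑ i, |W i j|)]
  obtain rfl : f = cost Cc lam β γ shat chi := funext₂ hf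
  simp_rw [hisNE]
  exact existsUnique_isSaddlePoint_cost hC hβpos hγ0 hγl hslo0 hshi1

theorem stmt_11
    (n : ℕ) (hn : 1 ≤ n)
    (W : Matrix (Fin n) (Fin n) ℝ) (hW : ∀ i j, 0 ≤ W i j)
    (c : Fin n → ℝ) (hc : ∀ i, 0 < c i)
    (lam : ℝ) (hlam0 : 0 ≤ lam) (hlam1 : lam < 1)
    (hWc : W.transpose.mulVec c = lam • c)
    (s : Fin n → ℝ) (hs : ∀ i, s i ∈ Set.Icc (0:ℝ) 1)
    (β γ : ℝ) (hγ0 : 0 ≤ γ) (hγβ : γ ≤ β)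
    (hnorm : max (2*β) (4*γ) ≤ 1 -
      max (Finset.univ.sup' (Finset.univ_nonempty_iff.mpr (Fin.pos_iff_nonempty.mp hn)) (fun i => ∑ j, |W i j|))
          (Finset.univ.sup' (Finset.univ_nonempty_iff.mpr (Fin.pos_iff_nonempty.mp hn)) (fun j => ∑ i, |W i j|)))
    (slo shi : ℝ)
    (hslo : slo = Finset.univ.inf' (Finset.univ_nonempty_iff.mpr (Fin.pos_iff_nonempty.mp hn)) s)
    (hshi : shi = Finset.univ.sup' (Finset.univ_nonempty_iff.mpr (Fin.pos_iff_nonempty.mp hn)) s)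
    (Cc shat chi : ℝ)
    (hCc : Cc = ∑ i, c i)
    (hshat : shat = ∑ i, (c i / Cc) * s i)
    (hchi : chi = ∑ i, (c i / Cc) * s i * (∑ j, W i j))
    (f : ℝ → ℝ → ℝ)
    (hf : ∀ g h, f g h = Cc * ((1 - 2*β + (h - g)*γ)*shat - chi + (h + g)*β + (g^2 - h^2)*γ)
        / (1 - lam + (g - h)*γ))
    (isNE : ℝ → ℝ → Prop)
    (hisNE : ∀ a b, isNE a b ↔ (a ∈ Set.Icc (0:ℝ) slo ∧ b ∈ Set.Icc shi 1 ∧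
      (∀ h ∈ Set.Icc shi 1, f a h ≤ f a b) ∧ (∀ g ∈ Set.Icc (0:ℝ) slo, f a b ≤ f g b)))
    (hβpos : 0 < β) :
    ∃! p : ℝ × ℝ, isNE p.1 p.2 :=
  stmt_11_general n hn W c hc lam hWc s hs β γ hγ0 hnorm slo shi hslo hshi Cc shat chi hCc f hf isNE
    hisNE hβpos
end

section
/- Assume in addition that γ > 0 and m(0, 1) ≥ 0. Then: (i) if q(0, 1) ≥ 0, the pair (0, 1) is a pure Nash equilibrium; (ii) if q(0, s̄) ≤ 0, the pair (0, s̄) is a pure Nash equilibrium; (iii) if q(0, 1) < 0 and q(0, s̄) > 0, the pair (0, r(0)) is a pure Nash equilibrium, where r(0) = (1 − λ)/γ − √((1 − λ)(1 − λ − β) − (2 − λ − 2β)γŝ + γχ)/γ. (Theorem 3, first case.) -/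
set_option maxHeartbeats 1000000

theorem stmt_13
    (n : ℕ) (hn : 1 ≤ n)
    (W : Matrix (Fin n) (Fin n) ℝ) (hW : ∀ i j, 0 ≤ W i j)
    (c : Fin n → ℝ) (hc : ∀ i, 0 < c i)
    (lam : ℝ) (hlam0 : 0 ≤ lam) (hlam1 : lam < 1)
    (hWc : W.transpose.mulVec c = lam • c)
    (s : Fin n → ℝ) (hs : ∀ i, s i ∈ Set.Icc (0:ℝ) 1)
    (β γ : ℝ) (hγ0 : 0 ≤ γ) (hγβ : γ ≤ β)
    (hnorm : max (2*β) (4*γ) ≤ 1 -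
      max (Finset.univ.sup' (Finset.univ_nonempty_iff.mpr (Fin.pos_iff_nonempty.mp hn)) (fun i => ∑ j, |W i j|))
          (Finset.univ.sup' (Finset.univ_nonempty_iff.mpr (Fin.pos_iff_nonempty.mp hn)) (fun j => ∑ i, |W i j|)))
    (slo shi : ℝ)
    (hslo : slo = Finset.univ.inf' (Finset.univ_nonempty_iff.mpr (Fin.pos_iff_nonempty.mp hn)) s)
    (hshi : shi = Finset.univ.sup' (Finset.univ_nonempty_iff.mpr (Fin.pos_iff_nonempty.mp hn)) s)
    (Cc shat chi : ℝ)
    (hCc : Cc = ∑ i, c i)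
    (hshat : shat = ∑ i, (c i / Cc) * s i)
    (hchi : chi = ∑ i, (c i / Cc) * s i * (∑ j, W i j))
    (f : ℝ → ℝ → ℝ)
    (hf : ∀ g h, f g h = Cc * ((1 - 2*β + (h - g)*γ)*shat - chi + (h + g)*β + (g^2 - h^2)*γ)
        / (1 - lam + (g - h)*γ))
    (isNE : ℝ → ℝ → Prop)
    (hisNE : ∀ a b, isNE a b ↔ (a ∈ Set.Icc (0:ℝ) slo ∧ b ∈ Set.Icc shi 1 ∧
      (∀ h ∈ Set.Icc shi 1, f a h ≤ f a b) ∧ (∀ g ∈ Set.Icc (0:ℝ) slo, f a b ≤ f g b)))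
    (q m : ℝ → ℝ → ℝ)
    (hq : ∀ g h, q g h = (β + γ*shat - 2*γ*h)*(1 - lam + γ*g)
        + ((1 - 2*β - g*γ)*shat - chi + g*β + g^2*γ)*γ + γ^2*h^2)
    (hm : ∀ g h, m g h = (β - γ*shat + 2*γ*g)*(1 - lam - h*γ) + g^2*γ^2
        - ((1 - 2*β + h*γ)*shat + h*β - h^2*γ - chi)*γ)
    (hγpos : 0 < γ) (hm01 : 0 ≤ m 0 1) :
    (0 ≤ q 0 1 → isNE 0 1) ∧
    (q 0 shi ≤ 0 → isNE 0 shi) ∧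
    (q 0 1 < 0 → 0 < q 0 shi →
      isNE 0 ((1 - lam)/γ
        - Real.sqrt ((1 - lam)*(1 - lam - β) - (2 - lam - 2*β)*γ*shat + γ*chi) / γ)) := by
  have hne : (Finset.univ : Finset (Fin n)).Nonempty :=
    Finset.univ_nonempty_iff.mpr (Fin.pos_iff_nonempty.mp hn)
  have i0 : Fin n := ⟨0, hn⟩
  have hCcpos : 0 < Cc := by
    rw [hCc]; exact Finset.sum_pos (fun i _ => hc i) hne
  -- lam ≤ row-sum sup
  have hrow : ∀ i : Fin n, ∑ j, W i j ≤
      Finset.univ.sup' hne (fun i => ∑ j, |W i j|) := by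
    intro i
    have h1 : ∑ j, W i j = ∑ j, |W i j| :=
      Finset.sum_congr rfl fun j _ => (abs_of_nonneg (hW i j)).symm
    rw [h1]
    exact Finset.le_sup' (fun i => ∑ j, |W i j|) (Finset.mem_univ i)
  have hlamle : lam ≤ Finset.univ.sup' hne (fun i => ∑ j, |W i j|) := by
    have h1 : ∀ i, ∑ j, W j i * c j = lam * c i := by
      intro i
      have := congrFun hWc i
      simpa [Matrix.mulVec, dotProduct, Matrix.transpose_apply] using this
    have h2 : lam * Cc = ∑ j, (∑ i, W j i) * c j := by
      rw [hCc, Finset.mul_sum]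
      rw [show (∑ i, lam * c i) = ∑ i, ∑ j, W j i * c j from
        Finset.sum_congr rfl fun i _ => (h1 i).symm]
      rw [Finset.sum_comm]
      exact Finset.sum_congr rfl fun j _ => (Finset.sum_mul _ _ _).symm
    set R := Finset.univ.sup' hne (fun i => ∑ j, |W i j|) with hR
    have h3 : lam * Cc ≤ R * Cc := by
      rw [h2, hCc, Finset.mul_sum]
      exact Finset.sum_le_sum fun j _ =>
        mul_le_mul_of_nonneg_right (hrow j) (hc j).le
    exact le_of_mul_le_mul_right h3 hCcpos
  have h4γ : 4*γ ≤ 1 - lam := by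
    have h1 : 4*γ ≤ max (2*β) (4*γ) := le_max_right _ _
    have h2 : lam ≤ max (Finset.univ.sup' hne (fun i => ∑ j, |W i j|))
        (Finset.univ.sup' hne (fun j => ∑ i, |W i j|)) :=
      hlamle.trans (le_max_left _ _)
    have := hnorm
    linarith [h1.trans hnorm]
  have h2β : 2*β ≤ 1 - lam := by
    have h1 : 2*β ≤ max (2*β) (4*γ) := le_max_left _ _
    linarith [h1.trans hnorm, hlamle.trans (le_max_left (Finset.univ.sup' hne (fun i => ∑ j, |W i j|)) (Finset.univ.sup' hne (fun j => ∑ i, |W i j|)))]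
  -- slo / shi bounds
  have hshi1 : shi ≤ 1 := by
    rw [hshi]; exact Finset.sup'_le _ _ fun i _ => (hs i).2
  have hslo0 : 0 ≤ slo := by
    rw [hslo]; exact Finset.le_inf' _ _ fun i _ => (hs i).1
  have hshi0 : 0 ≤ shi := by
    rw [hshi]
    exact le_trans (hs i0).1 (Finset.le_sup' s (Finset.mem_univ i0))
  have hsloshi : slo ≤ shi := by
    rw [hslo, hshi]
    exact le_trans (Finset.inf'_le s (Finset.mem_univ i0))
      (Finset.le_sup' s (Finset.mem_univ i0))
  -- key lemma
  have key : ∀ b, shi ≤ b → b ≤ 1 →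
      (∀ h, shi ≤ h → h ≤ 1 → (h - b) * q 0 b ≤ 0) → isNE 0 b := by
    intro b hb1 hb2 hcond
    have hDb : 0 < 1 - lam + (0 - b)*γ := by nlinarith
    have hm0b : 0 ≤ m 0 b := by
      have hm01' := hm01
      rw [hm] at hm01' ⊢
      have hfac : 0 ≤ γ * ((1-b)*(2*β - γ*(1+b))) := by
        apply mul_nonneg hγ0
        apply mul_nonneg (by linarith)
        nlinarith
      nlinarith [hm01', hfac]
    rw [hisNE]
    refine ⟨⟨le_refl 0, hslo0⟩, ⟨hb1, hb2⟩, ?_, ?_⟩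
    · intro h hh
      obtain ⟨hh1, hh2⟩ := hh
      have hDh : 0 < 1 - lam + (0 - h)*γ := by nlinarith
      rw [hf, hf, div_le_div_iff₀ hDh hDb]
      have A : Cc * ((h - b) * q 0 b) ≤ 0 :=
        mul_nonpos_iff.mpr (Or.inl ⟨hCcpos.le, hcond h hh1 hh2⟩)
      rw [hq] at A
      have B : 0 ≤ Cc * ((h - b)^2 * (γ * (1 - lam - γ*b))) := by
        apply mul_nonneg hCcpos.le
        apply mul_nonneg (sq_nonneg _)
        apply mul_nonneg hγ0
        nlinarith
      linarith [A, B]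
    · intro g hg
      obtain ⟨hg0, hg1⟩ := hg
      have hgb : g ≤ b := le_trans hg1 (hsloshi.trans hb1)
      have hDg : 0 < 1 - lam + (g - b)*γ := by nlinarith
      rw [hf, hf, div_le_div_iff₀ hDb hDg]
      have A : 0 ≤ Cc * (g * m 0 b) :=
        mul_nonneg hCcpos.le (mul_nonneg hg0 hm0b)
      rw [hm] at A
      have B : 0 ≤ Cc * (g^2 * (γ * (1 - lam - γ*b))) := by
        apply mul_nonneg hCcpos.le
        apply mul_nonneg (sq_nonneg _)
        apply mul_nonneg hγ0
        nlinarith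
      linarith [A, B]
  refine ⟨?_, ?_, ?_⟩
  · intro hq01
    apply key 1 hshi1 le_rfl
    intro h _ hh2
    exact mul_nonpos_iff.mpr (Or.inr ⟨by linarith, hq01⟩)
  · intro hqs
    apply key shi le_rfl hshi1
    intro h hh1 _
    exact mul_nonpos_iff.mpr (Or.inl ⟨by linarith, hqs⟩)
  · intro hq1 hqs
    set E := (1 - lam)*(1 - lam - β) - (2 - lam - 2*β)*γ*shat + γ*chi with hE
    set t := Real.sqrt E with ht
    set r := (1 - lam)/γ - t/γ with hr
    have hqid : ∀ x : ℝ, q 0 x = (γ*x - (1 - lam))^2 - E := by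
      intro x; rw [hq, hE]; ring
    have hEpos : 0 < E := by
      have := hq1
      rw [hqid 1] at this
      nlinarith [sq_nonneg (γ*1 - (1 - lam))]
    have ht2 : t^2 = E := Real.sq_sqrt hEpos.le
    have htpos : 0 ≤ t := Real.sqrt_nonneg E
    have hγr : γ * r = (1 - lam) - t := by
      rw [hr]; field_simp
    have hr1 : r ≤ 1 := by
      have h1 : 1 - lam - γ < t := by
        rw [hqid 1] at hq1
        nlinarith
      have : γ * r < γ * 1 := by rw [hγr]; linarith
      exact le_of_lt (lt_of_mul_lt_mul_left this hγ0)
    have hrs : shi ≤ r := by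
      have h0 : 0 < 1 - lam - γ*shi := by nlinarith
      have h1 : t < 1 - lam - γ*shi := by
        rw [ht]
        rw [show (1 - lam - γ*shi) = Real.sqrt ((1 - lam - γ*shi)^2) from
          (Real.sqrt_sq h0.le).symm]
        apply Real.sqrt_lt_sqrt hEpos.le
        rw [hqid shi] at hqs
        nlinarith
      have : γ * shi < γ * r := by rw [hγr]; linarith
      exact le_of_lt (lt_of_mul_lt_mul_left this hγ0)
    have hq0r : q 0 r = 0 := by
      rw [hqid r, hγr]
      nlinarith
    apply key r hrs hr1
    intro h _ _
    rw [hq0r, mul_zero]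
end

section
/- Assume in addition that γ > 0 and m(s̲, 1) ≤ 0. Then the pair (s̲, 1) is a pure Nash equilibrium. (Theorem 3, second case.) -/
theorem stmt_14
    (n : ℕ) (hn : 1 ≤ n)
    (W : Matrix (Fin n) (Fin n) ℝ) (hW : ∀ i j, 0 ≤ W i j)
    (c : Fin n → ℝ) (hc : ∀ i, 0 < c i)
    (lam : ℝ) (hlam0 : 0 ≤ lam) (hlam1 : lam < 1)
    (hWc : W.transpose.mulVec c = lam • c)
    (s : Fin n → ℝ) (hs : ∀ i, s i ∈ Set.Icc (0:ℝ) 1)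
    (β γ : ℝ) (hγ0 : 0 ≤ γ) (hγβ : γ ≤ β)
    (hnorm : max (2*β) (4*γ) ≤ 1 -
      max (Finset.univ.sup' (Finset.univ_nonempty_iff.mpr (Fin.pos_iff_nonempty.mp hn)) (fun i => ∑ j, |W i j|))
          (Finset.univ.sup' (Finset.univ_nonempty_iff.mpr (Fin.pos_iff_nonempty.mp hn)) (fun j => ∑ i, |W i j|)))
    (slo shi : ℝ)
    (hslo : slo = Finset.univ.inf' (Finset.univ_nonempty_iff.mpr (Fin.pos_iff_nonempty.mp hn)) s)
    (hshi : shi = Finset.univ.sup' (Finset.univ_nonempty_iff.mpr (Fin.pos_iff_nonempty.mp hn)) s)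
    (Cc shat chi : ℝ)
    (hCc : Cc = ∑ i, c i)
    (hshat : shat = ∑ i, (c i / Cc) * s i)
    (hchi : chi = ∑ i, (c i / Cc) * s i * (∑ j, W i j))
    (f : ℝ → ℝ → ℝ)
    (hf : ∀ g h, f g h = Cc * ((1 - 2*β + (h - g)*γ)*shat - chi + (h + g)*β + (g^2 - h^2)*γ)
        / (1 - lam + (g - h)*γ))
    (isNE : ℝ → ℝ → Prop)
    (hisNE : ∀ a b, isNE a b ↔ (a ∈ Set.Icc (0:ℝ) slo ∧ b ∈ Set.Icc shi 1 ∧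
      (∀ h ∈ Set.Icc shi 1, f a h ≤ f a b) ∧ (∀ g ∈ Set.Icc (0:ℝ) slo, f a b ≤ f g b)))
    (m : ℝ → ℝ → ℝ)
    (hm : ∀ g h, m g h = (β - γ*shat + 2*γ*g)*(1 - lam - h*γ) + g^2*γ^2
        - ((1 - 2*β + h*γ)*shat + h*β - h^2*γ - chi)*γ)
    (hγpos : 0 < γ) (hmle : m slo 1 ≤ 0) :
    isNE slo 1 := by
  have hne : (Finset.univ : Finset (Fin n)).Nonempty :=
    Finset.univ_nonempty_iff.mpr (Fin.pos_iff_nonempty.mp hn)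
  have hCcpos : 0 < Cc := by
    rw [hCc]; exact Finset.sum_pos (fun i _ => hc i) hne
  have hrow : ∀ i, (∑ j, W i j) ≤
      Finset.univ.sup' (Finset.univ_nonempty_iff.mpr (Fin.pos_iff_nonempty.mp hn))
        (fun i => ∑ j, |W i j|) := by
    intro i
    calc ∑ j, W i j ≤ ∑ j, |W i j| := Finset.sum_le_sum (fun j _ => le_abs_self _)
      _ ≤ _ := Finset.le_sup' (fun i => ∑ j, |W i j|) (Finset.mem_univ i)
  have hlamM : lam ≤ Finset.univ.sup' (Finset.univ_nonempty_iff.mpr (Fin.pos_iff_nonempty.mp hn))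
      (fun i => ∑ j, |W i j|) := by
    set M := Finset.univ.sup' (Finset.univ_nonempty_iff.mpr (Fin.pos_iff_nonempty.mp hn))
      (fun i => ∑ j, |W i j|) with hMdef
    have e1 : lam * Cc = ∑ i, (∑ j, W i j) * c i := by
      have hWc' : ∀ j, (W.transpose.mulVec c) j = lam * c j := by
        intro j; rw [hWc]; simp
      calc lam * Cc = ∑ j, lam * c j := by rw [hCc, Finset.mul_sum]
        _ = ∑ j, (W.transpose.mulVec c) j := by simp [hWc']
        _ = ∑ j, ∑ i, W i j * c i := by
            simp [Matrix.mulVec, dotProduct, Matrix.transpose_apply]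
        _ = ∑ i, ∑ j, W i j * c i := Finset.sum_comm
        _ = ∑ i, (∑ j, W i j) * c i := by simp [Finset.sum_mul]
    have h1 : lam * Cc ≤ M * Cc := by
      rw [e1]
      calc ∑ i, (∑ j, W i j) * c i ≤ ∑ i, M * c i :=
            Finset.sum_le_sum (fun i _ => mul_le_mul_of_nonneg_right (hrow i) (hc i).le)
        _ = M * Cc := by rw [hCc, Finset.mul_sum]
    exact le_of_mul_le_mul_right h1 hCcpos
  have h4g : 4*γ ≤ 1 - lam := by
    have h1 := le_trans (le_max_right (2*β) (4*γ)) hnorm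
    have h2 := le_max_left
      (Finset.univ.sup' (Finset.univ_nonempty_iff.mpr (Fin.pos_iff_nonempty.mp hn))
        (fun i => ∑ j, |W i j|))
      (Finset.univ.sup' (Finset.univ_nonempty_iff.mpr (Fin.pos_iff_nonempty.mp hn))
        (fun j => ∑ i, |W i j|))
    linarith
  have hslo0 : 0 ≤ slo := by
    rw [hslo]
    exact Finset.le_inf' _ _ (fun i _ => (hs i).1)
  have hshi1 : shi ≤ 1 := by
    rw [hshi]
    exact Finset.sup'_le _ _ (fun i _ => (hs i).2)
  have hgslo : 0 ≤ γ * slo := mul_nonneg hγ0 hslo0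
  have hm1 : (β - γ*shat + 2*γ*slo)*(1 - lam - 1*γ) + slo^2*γ^2
      - ((1 - 2*β + 1*γ)*shat + 1*β - 1^2*γ - chi)*γ ≤ 0 := by
    have := hmle; rw [hm] at this
    convert this using 2 <;> ring
  rw [hisNE]
  refine ⟨⟨hslo0, le_refl slo⟩, ⟨hshi1, le_refl 1⟩, ?_, ?_⟩
  · -- h-direction: f slo h ≤ f slo 1 for h ∈ [shi, 1]
    intro h hh
    have hh2 : h ≤ 1 := hh.2
    rw [hf, hf]
    have hDh : 0 < 1 - lam + (slo - h)*γ := by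
      have : 0 ≤ (slo - h + 1) * γ := mul_nonneg (by linarith) hγ0
      nlinarith
    have hD1 : 0 < 1 - lam + (slo - (1:ℝ))*γ := by linarith
    rw [div_le_div_iff₀ hDh hD1]
    -- Q(1) ≥ 0
    have hfac1 : 0 ≤ (β + γ*(slo - 1)) * (1 - lam + (slo - 1)*γ) :=
      mul_nonneg (by linarith) (by linarith)
    have hid1 : (1 - lam + slo*γ)*(γ*shat + β) - 2*(1 - lam + slo*γ)*γ
        + γ*((1 - 2*β)*shat - slo*γ*shat - chi + slo*β + slo^2*γ) + γ^2
        = 2*((β + γ*(slo - 1)) * (1 - lam + (slo - 1)*γ))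
          - ((β - γ*shat + 2*γ*slo)*(1 - lam - 1*γ) + slo^2*γ^2
            - ((1 - 2*β + 1*γ)*shat + 1*β - 1^2*γ - chi)*γ) := by ring
    have hQ1 : 0 ≤ (1 - lam + slo*γ)*(γ*shat + β) - 2*(1 - lam + slo*γ)*γ
        + γ*((1 - 2*β)*shat - slo*γ*shat - chi + slo*β + slo^2*γ) + γ^2 := by
      linarith
    -- Q(h) ≥ Q(1) ≥ 0
    have hfac2 : 0 ≤ (1 - h) * (γ * ((1 - lam + slo*γ) - γ)) :=
      mul_nonneg (by linarith) (mul_nonneg hγ0 (by linarith))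
    have hid2 : (1 - lam + slo*γ)*(γ*shat + β) - (1 - lam + slo*γ)*γ*(h+1)
        + γ*((1 - 2*β)*shat - slo*γ*shat - chi + slo*β + slo^2*γ) + γ^2*h
        = ((1 - lam + slo*γ)*(γ*shat + β) - 2*(1 - lam + slo*γ)*γ
            + γ*((1 - 2*β)*shat - slo*γ*shat - chi + slo*β + slo^2*γ) + γ^2)
          + (1 - h) * (γ * ((1 - lam + slo*γ) - γ)) := by ring
    have hQh : 0 ≤ (1 - lam + slo*γ)*(γ*shat + β) - (1 - lam + slo*γ)*γ*(h+1)
        + γ*((1 - 2*β)*shat - slo*γ*shat - chi + slo*β + slo^2*γ) + γ^2*h := by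
      linarith
    have hprod : 0 ≤ (Cc * (1 - h)) * ((1 - lam + slo*γ)*(γ*shat + β)
        - (1 - lam + slo*γ)*γ*(h+1)
        + γ*((1 - 2*β)*shat - slo*γ*shat - chi + slo*β + slo^2*γ) + γ^2*h) :=
      mul_nonneg (mul_nonneg hCcpos.le (by linarith)) hQh
    have hidF : Cc * ((1 - 2*β + (1 - slo)*γ)*shat - chi + (1 + slo)*β + (slo^2 - 1^2)*γ)
          * (1 - lam + (slo - h)*γ)
        - Cc * ((1 - 2*β + (h - slo)*γ)*shat - chi + (h + slo)*β + (slo^2 - h^2)*γ)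
          * (1 - lam + (slo - 1)*γ)
        = (Cc * (1 - h)) * ((1 - lam + slo*γ)*(γ*shat + β)
            - (1 - lam + slo*γ)*γ*(h+1)
            + γ*((1 - 2*β)*shat - slo*γ*shat - chi + slo*β + slo^2*γ) + γ^2*h) := by
      ring
    linarith
  · -- g-direction: f slo 1 ≤ f g 1 for g ∈ [0, slo]
    intro g hg
    obtain ⟨hg0, hgslo2⟩ := hg
    rw [hf, hf]
    have hDs : 0 < 1 - lam + (slo - (1:ℝ))*γ := by linarith
    have hDg : 0 < 1 - lam + (g - (1:ℝ))*γ := by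
      have : 0 ≤ γ * g := mul_nonneg hγ0 hg0
      nlinarith
    rw [div_le_div_iff₀ hDs hDg]
    have hfacR : 0 ≤ (slo - g) * ((1 - lam - γ)*γ + γ^2*slo) :=
      mul_nonneg (by linarith)
        (by
          have h1 : 0 ≤ (1 - lam - γ)*γ := mul_nonneg (by linarith) hγ0
          have h2 : 0 ≤ γ^2*slo := mul_nonneg (sq_nonneg γ) hslo0
          linarith)
    have hidR : ((1 - lam - γ)*(β - γ*shat) + (1 - lam - γ)*γ*(slo + slo)
          - γ*((1 - 2*β + γ)*shat - chi + β - γ) + γ^2*slo*slo)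
        - ((1 - lam - γ)*(β - γ*shat) + (1 - lam - γ)*γ*(slo + g)
          - γ*((1 - 2*β + γ)*shat - chi + β - γ) + γ^2*slo*g)
        = (slo - g) * ((1 - lam - γ)*γ + γ^2*slo) := by ring
    have hidRs : (1 - lam - γ)*(β - γ*shat) + (1 - lam - γ)*γ*(slo + slo)
          - γ*((1 - 2*β + γ)*shat - chi + β - γ) + γ^2*slo*slo
        = (β - γ*shat + 2*γ*slo)*(1 - lam - 1*γ) + slo^2*γ^2
          - ((1 - 2*β + 1*γ)*shat + 1*β - 1^2*γ - chi)*γ := by ring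
    have hRg : (1 - lam - γ)*(β - γ*shat) + (1 - lam - γ)*γ*(slo + g)
        - γ*((1 - 2*β + γ)*shat - chi + β - γ) + γ^2*slo*g ≤ 0 := by linarith
    have hprod : 0 ≤ (Cc * (slo - g)) * (-((1 - lam - γ)*(β - γ*shat)
        + (1 - lam - γ)*γ*(slo + g)
        - γ*((1 - 2*β + γ)*shat - chi + β - γ) + γ^2*slo*g)) :=
      mul_nonneg (mul_nonneg hCcpos.le (by linarith)) (by linarith)
    have hidF : Cc * ((1 - 2*β + (1 - g)*γ)*shat - chi + (1 + g)*β + (g^2 - 1^2)*γ)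
          * (1 - lam + (slo - 1)*γ)
        - Cc * ((1 - 2*β + (1 - slo)*γ)*shat - chi + (1 + slo)*β + (slo^2 - 1^2)*γ)
          * (1 - lam + (g - 1)*γ)
        = (Cc * (slo - g)) * (-((1 - lam - γ)*(β - γ*shat)
            + (1 - lam - γ)*γ*(slo + g)
            - γ*((1 - 2*β + γ)*shat - chi + β - γ) + γ^2*slo*g)) := by
      ring
    linarith
end

section
/- Assume in addition that γ > 0, m(0, 1) < 0, and m(s̲, 1) > 0. Then the pair (w(1), 1) is a pure Nash equilibrium, where w(1) = 1 − (1 − λ)/γ + √((1 − λ)(1 − λ − 2γ − β) + (2 − λ − 2β)γŝ + 2βγ − χγ)/γ. (Theorem 3, third case.) -/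
set_option maxHeartbeats 1600000 in
theorem stmt_15
    (n : ℕ) (hn : 1 ≤ n)
    (W : Matrix (Fin n) (Fin n) ℝ) (hW : ∀ i j, 0 ≤ W i j)
    (c : Fin n → ℝ) (hc : ∀ i, 0 < c i)
    (lam : ℝ) (hlam0 : 0 ≤ lam) (hlam1 : lam < 1)
    (hWc : W.transpose.mulVec c = lam • c)
    (s : Fin n → ℝ) (hs : ∀ i, s i ∈ Set.Icc (0:ℝ) 1)
    (β γ : ℝ) (hγ0 : 0 ≤ γ) (hγβ : γ ≤ β)
    (hnorm : max (2*β) (4*γ) ≤ 1 -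
      max (Finset.univ.sup' (Finset.univ_nonempty_iff.mpr (Fin.pos_iff_nonempty.mp hn)) (fun i => ∑ j, |W i j|))
          (Finset.univ.sup' (Finset.univ_nonempty_iff.mpr (Fin.pos_iff_nonempty.mp hn)) (fun j => ∑ i, |W i j|)))
    (slo shi : ℝ)
    (hslo : slo = Finset.univ.inf' (Finset.univ_nonempty_iff.mpr (Fin.pos_iff_nonempty.mp hn)) s)
    (hshi : shi = Finset.univ.sup' (Finset.univ_nonempty_iff.mpr (Fin.pos_iff_nonempty.mp hn)) s)
    (Cc shat chi : ℝ)
    (hCc : Cc = ∑ i, c i)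
    (hshat : shat = ∑ i, (c i / Cc) * s i)
    (hchi : chi = ∑ i, (c i / Cc) * s i * (∑ j, W i j))
    (f : ℝ → ℝ → ℝ)
    (hf : ∀ g h, f g h = Cc * ((1 - 2*β + (h - g)*γ)*shat - chi + (h + g)*β + (g^2 - h^2)*γ)
        / (1 - lam + (g - h)*γ))
    (isNE : ℝ → ℝ → Prop)
    (hisNE : ∀ a b, isNE a b ↔ (a ∈ Set.Icc (0:ℝ) slo ∧ b ∈ Set.Icc shi 1 ∧
      (∀ h ∈ Set.Icc shi 1, f a h ≤ f a b) ∧ (∀ g ∈ Set.Icc (0:ℝ) slo, f a b ≤ f g b)))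
    (m : ℝ → ℝ → ℝ)
    (hm : ∀ g h, m g h = (β - γ*shat + 2*γ*g)*(1 - lam - h*γ) + g^2*γ^2
        - ((1 - 2*β + h*γ)*shat + h*β - h^2*γ - chi)*γ)
    (hγpos : 0 < γ) (hm01 : m 0 1 < 0) (hmslo : 0 < m slo 1) :
    isNE (1 - (1 - lam)/γ
      + Real.sqrt ((1 - lam)*(1 - lam - 2*γ - β) + (2 - lam - 2*β)*γ*shat + 2*β*γ - chi*γ) / γ) 1 := by
  classical
  have hne : (Finset.univ : Finset (Fin n)).Nonempty :=
    Finset.univ_nonempty_iff.mpr (Fin.pos_iff_nonempty.mp hn)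
  have hCpos : 0 < Cc := by
    rw [hCc]; exact Finset.sum_pos (fun i _ => hc i) hne
  -- eigenvalue bound : lam <= row-sum sup
  set R : ℝ := Finset.univ.sup' hne (fun i => ∑ j, |W i j|) with hR
  have hrow : ∀ i, (∑ j, W i j) ≤ R := by
    intro i
    have h1 : (∑ j, W i j) = ∑ j, |W i j| :=
      Finset.sum_congr rfl (fun j _ => (abs_of_nonneg (hW i j)).symm)
    rw [h1, hR]
    exact Finset.le_sup' (fun i => ∑ j, |W i j|) (Finset.mem_univ i)
  have hsum : lam * Cc = ∑ i, c i * (∑ j, W i j) := by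
    have h1 : ∑ j, (W.transpose.mulVec c) j = lam * Cc := by
      rw [hWc]; simp [hCc, Finset.mul_sum]
    rw [← h1]
    simp only [Matrix.mulVec, Matrix.transpose_apply, dotProduct]
    rw [Finset.sum_comm]
    exact Finset.sum_congr rfl (fun i _ => by rw [Finset.mul_sum]; exact Finset.sum_congr rfl (fun j _ => mul_comm _ _))
  have hlamR : lam ≤ R := by
    have h2 : lam * Cc ≤ R * Cc := by
      rw [hsum]
      calc ∑ i, c i * (∑ j, W i j) ≤ ∑ i, c i * R :=
            Finset.sum_le_sum (fun i _ => mul_le_mul_of_nonneg_left (hrow i) (hc i).le)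
        _ = R * Cc := by rw [hCc, Finset.mul_sum]; exact Finset.sum_congr rfl (fun i _ => mul_comm _ _)
    exact le_of_mul_le_mul_right h2 hCpos
  have h2b : 2*β ≤ 1 - lam := by
    have h1 := le_trans (le_max_left (2*β) (4*γ)) hnorm
    have h2 : R ≤ max (Finset.univ.sup' (Finset.univ_nonempty_iff.mpr (Fin.pos_iff_nonempty.mp hn)) (fun i => ∑ j, |W i j|))
          (Finset.univ.sup' (Finset.univ_nonempty_iff.mpr (Fin.pos_iff_nonempty.mp hn)) (fun j => ∑ i, |W i j|)) :=
      le_max_left _ _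
    linarith
  have h4g : 4*γ ≤ 1 - lam := by
    have h1 := le_trans (le_max_right (2*β) (4*γ)) hnorm
    have h2 : R ≤ max (Finset.univ.sup' (Finset.univ_nonempty_iff.mpr (Fin.pos_iff_nonempty.mp hn)) (fun i => ∑ j, |W i j|))
          (Finset.univ.sup' (Finset.univ_nonempty_iff.mpr (Fin.pos_iff_nonempty.mp hn)) (fun j => ∑ i, |W i j|)) :=
      le_max_left _ _
    linarith
  -- bounds on slo, shi
  have hslo0 : 0 ≤ slo := by
    rw [hslo]; exact Finset.le_inf' _ _ (fun i _ => (hs i).1)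
  have hshi1 : shi ≤ 1 := by
    rw [hshi]; exact Finset.sup'_le _ _ (fun i _ => (hs i).2)
  -- the candidate g*
  set Δ : ℝ := (1 - lam)*(1 - lam - 2*γ - β) + (2 - lam - 2*β)*γ*shat + 2*β*γ - chi*γ with hΔdef
  have hΔm : Δ = (1 - lam - γ)^2 - m 0 1 := by rw [hm]; ring
  have hΔ0 : 0 ≤ Δ := by
    rw [hΔm]; nlinarith [sq_nonneg (1 - lam - γ), hm01]
  set r : ℝ := Real.sqrt Δ with hrdef
  have hr2 : r^2 = Δ := Real.sq_sqrt hΔ0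
  have hr0 : 0 ≤ r := Real.sqrt_nonneg _
  set gs : ℝ := 1 - (1 - lam)/γ + r/γ with hgsdef
  have hγne : γ ≠ 0 := ne_of_gt hγpos
  have hgγ : γ * gs = γ - (1 - lam) + r := by
    rw [hgsdef]; field_simp
  have hΔexp : r^2 = (1 - lam)*(1 - lam - 2*γ - β) + (2 - lam - 2*β)*γ*shat + 2*β*γ - chi*γ :=
    hr2.trans hΔdef
  have hq : m gs 1 = 0 := by
    rw [hm]
    linear_combination (γ*gs + (γ - (1 - lam) + r) + 2*(1 - lam - γ)) * hgγ + hΔexp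
  have hlg : 0 < 1 - lam - γ := by linarith
  have hrgt : 1 - lam - γ < r := by
    have h1 : (1 - lam - γ)^2 < r^2 := by rw [hr2, hΔm]; linarith
    nlinarith
  have hgs0 : 0 < gs := by
    have h1 : 0 < γ * gs := by rw [hgγ]; linarith
    nlinarith [h1, hγpos]
  have hgslo : gs ≤ slo := by
    by_contra hcon
    push_neg at hcon
    have hfac : m slo 1 - m gs 1 = (slo - gs) * (γ^2*(slo+gs) + 2*γ*(1 - lam - γ)) := by
      rw [hm, hm]; ring
    have hK : 0 < γ^2*(slo+gs) + 2*γ*(1 - lam - γ) := by positivity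
    nlinarith [mul_neg_of_neg_of_pos (show slo - gs < 0 by linarith) hK]
  -- denominator positivity
  have hD : ∀ g h : ℝ, 0 ≤ g → h ≤ 1 → 0 < 1 - lam + (g - h)*γ := by
    intro g h hg hh
    nlinarith [mul_nonneg hg hγ0, mul_nonneg (sub_nonneg.mpr hh) hγ0]
  rw [hisNE]
  refine ⟨⟨hgs0.le, hgslo⟩, ⟨hshi1, le_refl 1⟩, ?_, ?_⟩
  · -- h-part : f gs h ≤ f gs 1 for h ∈ [shi, 1]
    intro h hh
    have hh1 : h ≤ 1 := hh.2
    rw [hf, hf]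
    have hDh : 0 < 1 - lam + (gs - h)*γ := hD gs h hgs0.le hh1
    have hD1 : 0 < 1 - lam + (gs - 1)*γ := hD gs 1 hgs0.le le_rfl
    rw [div_le_div_iff₀ hDh hD1]
    have hq' := hq
    rw [hm] at hq'
    have key : Cc * ((1 - 2*β + (1 - gs)*γ)*shat - chi + (1 + gs)*β + (gs^2 - 1^2)*γ) * (1 - lam + (gs - h)*γ)
        - Cc * ((1 - 2*β + (h - gs)*γ)*shat - chi + (h + gs)*β + (gs^2 - h^2)*γ) * (1 - lam + (gs - 1)*γ)
        = Cc * ((1 - h) * (1 - lam + (gs - 1)*γ) * (2*(β - γ + γ*gs) + γ*(1 - h))) := by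
      linear_combination (Cc*(h-1)) * hq'
    have hterm : 0 ≤ 2*(β - γ + γ*gs) + γ*(1 - h) := by
      nlinarith [mul_nonneg hγ0 hgs0.le, mul_nonneg hγ0 (sub_nonneg.mpr hh1)]
    linarith [key, mul_nonneg (mul_nonneg (mul_nonneg hCpos.le (sub_nonneg.mpr hh1)) hD1.le) hterm]
  · -- g-part : f gs 1 ≤ f g 1 for g ∈ [0, slo]
    intro g hg
    have hg0 : 0 ≤ g := hg.1
    rw [hf, hf]
    have hDg : 0 < 1 - lam + (g - 1)*γ := hD g 1 hg0 le_rfl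
    have hD1 : 0 < 1 - lam + (gs - 1)*γ := hD gs 1 hgs0.le le_rfl
    rw [div_le_div_iff₀ hD1 hDg]
    have hq' := hq
    rw [hm] at hq'
    have key : Cc * ((1 - 2*β + (1 - g)*γ)*shat - chi + (1 + g)*β + (g^2 - 1^2)*γ) * (1 - lam + (gs - 1)*γ)
        - Cc * ((1 - 2*β + (1 - gs)*γ)*shat - chi + (1 + gs)*β + (gs^2 - 1^2)*γ) * (1 - lam + (g - 1)*γ)
        = Cc * (γ * (1 - lam + (gs - 1)*γ) * (g - gs)^2) := by
      linear_combination (Cc*(g-gs)) * hq'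
    linarith [key, mul_nonneg (mul_nonneg (mul_nonneg hCpos.le hγ0) hD1.le) (sq_nonneg (g - gs))]
end

section
/- Assume in addition that sᵢ = 1/2 for every i (all innate opinions are neutral). Then the pair (0, 1) is a pure Nash equilibrium: f(0, h) ≤ f(0, 1) for every h ∈ [1/2, 1] and f(0, 1) ≤ f(g, 1) for every g ∈ [0, 1/2]. (Corollary 3.) -/
theorem stmt_17
    (n : ℕ) (hn : 1 ≤ n)
    (W : Matrix (Fin n) (Fin n) ℝ) (hW : ∀ i j, 0 ≤ W i j)
    (c : Fin n → ℝ) (hc : ∀ i, 0 < c i)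
    (lam : ℝ) (hlam0 : 0 ≤ lam) (hlam1 : lam < 1)
    (hWc : W.transpose.mulVec c = lam • c)
    (s : Fin n → ℝ) (hs : ∀ i, s i ∈ Set.Icc (0:ℝ) 1)
    (β γ : ℝ) (hγ0 : 0 ≤ γ) (hγβ : γ ≤ β)
    (hnorm : max (2*β) (4*γ) ≤ 1 -
      max (Finset.univ.sup' (Finset.univ_nonempty_iff.mpr (Fin.pos_iff_nonempty.mp hn)) (fun i => ∑ j, |W i j|))
          (Finset.univ.sup' (Finset.univ_nonempty_iff.mpr (Fin.pos_iff_nonempty.mp hn)) (fun j => ∑ i, |W i j|)))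
    (slo shi : ℝ)
    (hslo : slo = Finset.univ.inf' (Finset.univ_nonempty_iff.mpr (Fin.pos_iff_nonempty.mp hn)) s)
    (hshi : shi = Finset.univ.sup' (Finset.univ_nonempty_iff.mpr (Fin.pos_iff_nonempty.mp hn)) s)
    (Cc shat chi : ℝ)
    (hCc : Cc = ∑ i, c i)
    (hshat : shat = ∑ i, (c i / Cc) * s i)
    (hchi : chi = ∑ i, (c i / Cc) * s i * (∑ j, W i j))
    (f : ℝ → ℝ → ℝ)
    (hf : ∀ g h, f g h = Cc * ((1 - 2*β + (h - g)*γ)*shat - chi + (h + g)*β + (g^2 - h^2)*γ)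
        / (1 - lam + (g - h)*γ))
    (isNE : ℝ → ℝ → Prop)
    (hisNE : ∀ a b, isNE a b ↔ (a ∈ Set.Icc (0:ℝ) slo ∧ b ∈ Set.Icc shi 1 ∧
      (∀ h ∈ Set.Icc shi 1, f a h ≤ f a b) ∧ (∀ g ∈ Set.Icc (0:ℝ) slo, f a b ≤ f g b)))
    (hneutral : ∀ i, s i = 1/2) :
    (∀ h ∈ Set.Icc ((1:ℝ)/2) 1, f 0 h ≤ f 0 1) ∧
    (∀ g ∈ Set.Icc (0:ℝ) (1/2), f 0 1 ≤ f g 1) := by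
  have hne : (Finset.univ : Finset (Fin n)).Nonempty :=
    Finset.univ_nonempty_iff.mpr (Fin.pos_iff_nonempty.mp hn)
  have hβ0 : 0 ≤ β := le_trans hγ0 hγβ
  have hCc0 : 0 < Cc := by
    rw [hCc]; exact Finset.sum_pos (fun i _ => hc i) hne
  -- shat = 1/2
  have hshat2 : shat = 1/2 := by
    rw [hshat]
    have h1 : ∀ i ∈ Finset.univ, (c i / Cc) * s i = c i * (1/(2*Cc)) := by
      intro i _; rw [hneutral i]; ring
    rw [Finset.sum_congr rfl h1, ← Finset.sum_mul, ← hCc]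
    field_simp
  -- lam * Cc = ∑ i, c i * (∑ j, W i j)
  have hlamCc : lam * Cc = ∑ i, c i * (∑ j, W i j) := by
    have h1 : ∀ j, (∑ i, W i j * c i) = lam * c j := by
      intro j
      have := congrFun hWc j
      simpa [Matrix.mulVec, dotProduct, Matrix.transpose_apply, mul_comm] using this
    calc lam * Cc = ∑ j, lam * c j := by rw [hCc, Finset.mul_sum]
      _ = ∑ j, ∑ i, W i j * c i := by
          exact Finset.sum_congr rfl fun j _ => (h1 j).symm
      _ = ∑ i, ∑ j, W i j * c i := Finset.sum_comm
      _ = ∑ i, c i * ∑ j, W i j := by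
          refine Finset.sum_congr rfl fun i _ => ?_
          rw [Finset.mul_sum]
          exact Finset.sum_congr rfl fun j _ => mul_comm _ _
  -- chi = lam / 2
  have hchi2 : chi = lam / 2 := by
    rw [hchi]
    have h1 : ∀ i ∈ Finset.univ, (c i / Cc) * s i * (∑ j, W i j)
        = (c i * (∑ j, W i j)) * (1/(2*Cc)) := by
      intro i _; rw [hneutral i]; ring
    rw [Finset.sum_congr rfl h1, ← Finset.sum_mul, ← hlamCc]
    field_simp
  -- lam ≤ 1 - 4γ
  have hlamle : lam ≤ 1 - 4*γ := by
    set Nr := Finset.univ.sup' hne (fun i => ∑ j, |W i j|) with hNr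
    have hNrle : Nr ≤ 1 - 4*γ := by
      have h2 : (4:ℝ)*γ ≤ max (2*β) (4*γ) := le_max_right _ _
      have h3 : Nr ≤ max Nr (Finset.univ.sup' hne (fun j => ∑ i, |W i j|)) := le_max_left _ _
      have := hnorm
      linarith [le_trans h2 this, h3]
    have hrow : ∀ i, (∑ j, W i j) ≤ Nr := by
      intro i
      have : (∑ j, W i j) = ∑ j, |W i j| :=
        Finset.sum_congr rfl fun j _ => (abs_of_nonneg (hW i j)).symm
      rw [this]
      exact Finset.le_sup' (fun i => ∑ j, |W i j|) (Finset.mem_univ i)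
    have hsum : lam * Cc ≤ (1 - 4*γ) * Cc := by
      rw [hlamCc, hCc, Finset.mul_sum]
      refine Finset.sum_le_sum fun i _ => ?_
      calc c i * (∑ j, W i j) ≤ c i * (1 - 4*γ) :=
            mul_le_mul_of_nonneg_left (le_trans (hrow i) hNrle) (hc i).le
        _ = (1 - 4*γ) * c i := mul_comm _ _
    exact le_of_mul_le_mul_right (by simpa [mul_comm] using hsum) hCc0
  have hu0 : 0 < 1 - lam := by linarith
  have hγu : 4*γ ≤ 1 - lam := by linarith
  -- f 0 1 = Cc / 2
  have hD01 : 0 < 1 - lam + (0 - 1)*γ := by nlinarith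
  have hf01 : f 0 1 = Cc / 2 := by
    rw [hf, hshat2, hchi2, div_eq_iff (ne_of_gt hD01)]
    ring
  constructor
  · intro h hh
    obtain ⟨hh1, hh2⟩ := hh
    have hDh : 0 < 1 - lam + (0 - h)*γ := by nlinarith [mul_nonneg hγ0 (sub_nonneg.2 hh2)]
    rw [hf01, hf, hshat2, hchi2, div_le_iff₀ hDh]
    have hβγh : 0 ≤ β - γ*h := by nlinarith [mul_nonneg hγ0 (sub_nonneg.2 hh2)]
    have hq : 0 ≤ Cc * (1 - h) * (β - γ*h) :=
      mul_nonneg (mul_nonneg hCc0.le (sub_nonneg.2 hh2)) hβγh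
    have heq : Cc / 2 * (1 - lam + (0 - h)*γ)
        - Cc * ((1 - 2*β + (h - 0)*γ)*(1/2) - lam/2 + (h + 0)*β + (0^2 - h^2)*γ)
        = Cc * (1 - h) * (β - γ*h) := by ring
    linarith
  · intro g hg
    obtain ⟨hg1, hg2⟩ := hg
    have hDg : 0 < 1 - lam + (g - 1)*γ := by nlinarith [mul_nonneg hγ0 hg1]
    rw [hf01, hf, hshat2, hchi2, le_div_iff₀ hDg]
    have key : 0 ≤ β - γ + g*γ := by nlinarith [mul_nonneg hγ0 hg1]
    have hq : 0 ≤ Cc * g * (β - γ + g*γ) :=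
      mul_nonneg (mul_nonneg hCc0.le hg1) key
    have heq : Cc * ((1 - 2*β + (1 - g)*γ)*(1/2) - lam/2 + (1 + g)*β + (g^2 - 1^2)*γ)
        - Cc / 2 * (1 - lam + (g - 1)*γ) = Cc * g * (β - γ + g*γ) := by ring
    linarith
end

section
/- Assume in addition that γ > 0 and sᵢ = 0 for every i (so s̲ = s̄ = 0, the strategy set of the first player is {0}, and that of the second player is [0, 1]). Define q̃(0,0) = β − βλ − χγ, q̃(0,1) = (γ − χ)γ + (β − 2γ)(1 − λ), and r̃(0) = (1 − λ − √((1 − λ)(1 − λ − β) + χγ))/γ. Then: if q̃(0,1) ≥ 0, the pair (0, 1) is a pure Nash equilibrium; if q̃(0,0) ≤ 0, the pair (0, 0) is a pure Nash equilibrium; otherwise the pair (0, r̃(0)) is a pure Nash equilibrium. (Corollary 4.) -/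
set_option maxHeartbeats 2000000 in
theorem stmt_18
    (n : ℕ) (hn : 1 ≤ n)
    (W : Matrix (Fin n) (Fin n) ℝ) (hW : ∀ i j, 0 ≤ W i j)
    (c : Fin n → ℝ) (hc : ∀ i, 0 < c i)
    (lam : ℝ) (hlam0 : 0 ≤ lam) (hlam1 : lam < 1)
    (hWc : W.transpose.mulVec c = lam • c)
    (s : Fin n → ℝ) (hs : ∀ i, s i ∈ Set.Icc (0:ℝ) 1)
    (β γ : ℝ) (hγ0 : 0 ≤ γ) (hγβ : γ ≤ β)
    (hnorm : max (2*β) (4*γ) ≤ 1 -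
      max (Finset.univ.sup' (Finset.univ_nonempty_iff.mpr (Fin.pos_iff_nonempty.mp hn)) (fun i => ∑ j, |W i j|))
          (Finset.univ.sup' (Finset.univ_nonempty_iff.mpr (Fin.pos_iff_nonempty.mp hn)) (fun j => ∑ i, |W i j|)))
    (slo shi : ℝ)
    (hslo : slo = Finset.univ.inf' (Finset.univ_nonempty_iff.mpr (Fin.pos_iff_nonempty.mp hn)) s)
    (hshi : shi = Finset.univ.sup' (Finset.univ_nonempty_iff.mpr (Fin.pos_iff_nonempty.mp hn)) s)
    (Cc shat chi : ℝ)
    (hCc : Cc = ∑ i, c i)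
    (hshat : shat = ∑ i, (c i / Cc) * s i)
    (hchi : chi = ∑ i, (c i / Cc) * s i * (∑ j, W i j))
    (f : ℝ → ℝ → ℝ)
    (hf : ∀ g h, f g h = Cc * ((1 - 2*β + (h - g)*γ)*shat - chi + (h + g)*β + (g^2 - h^2)*γ)
        / (1 - lam + (g - h)*γ))
    (isNE : ℝ → ℝ → Prop)
    (hisNE : ∀ a b, isNE a b ↔ (a ∈ Set.Icc (0:ℝ) slo ∧ b ∈ Set.Icc shi 1 ∧
      (∀ h ∈ Set.Icc shi 1, f a h ≤ f a b) ∧ (∀ g ∈ Set.Icc (0:ℝ) slo, f a b ≤ f g b)))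
    (hγpos : 0 < γ) (hzero : ∀ i, s i = 0)
    (qt00 qt01 rt0 : ℝ)
    (hqt00 : qt00 = β - β*lam - chi*γ)
    (hqt01 : qt01 = (γ - chi)*γ + (β - 2*γ)*(1 - lam))
    (hrt0 : rt0 = (1 - lam - Real.sqrt ((1 - lam)*(1 - lam - β) + chi*γ)) / γ) :
    (0 ≤ qt01 → isNE 0 1) ∧
    (qt00 ≤ 0 → isNE 0 0) ∧
    (qt01 < 0 → 0 < qt00 → isNE 0 rt0) := by

  have hne : (Finset.univ : Finset (Fin n)).Nonempty :=
    Finset.univ_nonempty_iff.mpr (Fin.pos_iff_nonempty.mp hn)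
  have hszero : s = fun _ => (0:ℝ) := funext hzero
  have hslo0 : slo = 0 := by rw [hslo, hszero, Finset.inf'_const]
  have hshi0 : shi = 0 := by rw [hshi, hszero, Finset.sup'_const]
  have hshat0 : shat = 0 := by simp [hshat, hzero]
  have hchi0 : chi = 0 := by simp [hchi, hzero]
  subst hslo0 hshi0 hshat0 hchi0
  have hCcpos : 0 < Cc := hCc ▸ Finset.sum_pos (fun i _ => hc i) hne
  have hβpos : 0 < β := lt_of_lt_of_le hγpos hγβ
  -- eigenvalue bound: lam ≤ max column sum
  obtain ⟨j, -, hj⟩ := Finset.exists_max_image (Finset.univ : Finset (Fin n)) c hne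
  have hjpos := hc j
  have h1 : ∑ i, W i j * c i = lam * c j := by
    have h2 := congrFun hWc j
    simpa [Matrix.mulVec, dotProduct, Matrix.transpose_apply] using h2
  have hsum : ∑ i, W i j * c i ≤ (∑ i, W i j) * c j := by
    rw [Finset.sum_mul]
    exact Finset.sum_le_sum
      (fun i _ => mul_le_mul_of_nonneg_left (hj i (Finset.mem_univ i)) (hW i j))
  have hBj : (∑ i, |W i j|) ≤
      Finset.univ.sup' (Finset.univ_nonempty_iff.mpr (Fin.pos_iff_nonempty.mp hn))
        (fun j => ∑ i, |W i j|) :=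
    Finset.le_sup' (fun j => ∑ i, |W i j|) (Finset.mem_univ j)
  have habs : (∑ i, |W i j|) = ∑ i, W i j :=
    Finset.sum_congr rfl (fun i _ => abs_of_nonneg (hW i j))
  have hlamB : lam ≤
      Finset.univ.sup' (Finset.univ_nonempty_iff.mpr (Fin.pos_iff_nonempty.mp hn))
        (fun j => ∑ i, |W i j|) := by
    have h3 : lam * c j ≤ (Finset.univ.sup'
        (Finset.univ_nonempty_iff.mpr (Fin.pos_iff_nonempty.mp hn))
        (fun j => ∑ i, |W i j|)) * c j := by
      calc lam * c j = ∑ i, W i j * c i := h1.symm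
        _ ≤ (∑ i, W i j) * c j := hsum
        _ ≤ _ := mul_le_mul_of_nonneg_right (habs ▸ hBj) hjpos.le
    exact le_of_mul_le_mul_right h3 hjpos
  have hD2 : 2*β ≤ 1 - lam := by
    have h4 : 2*β ≤ 1 - max
        (Finset.univ.sup' (Finset.univ_nonempty_iff.mpr (Fin.pos_iff_nonempty.mp hn)) (fun i => ∑ j, |W i j|))
        (Finset.univ.sup' (Finset.univ_nonempty_iff.mpr (Fin.pos_iff_nonempty.mp hn)) (fun j => ∑ i, |W i j|)) :=
      le_trans (le_max_left _ _) hnorm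
    have h5 := le_max_right
      (Finset.univ.sup' (Finset.univ_nonempty_iff.mpr (Fin.pos_iff_nonempty.mp hn)) (fun i => ∑ j, |W i j|))
      (Finset.univ.sup' (Finset.univ_nonempty_iff.mpr (Fin.pos_iff_nonempty.mp hn)) (fun j => ∑ i, |W i j|))
    linarith
  have hD4 : 4*γ ≤ 1 - lam := by
    have h4 : 4*γ ≤ 1 - max
        (Finset.univ.sup' (Finset.univ_nonempty_iff.mpr (Fin.pos_iff_nonempty.mp hn)) (fun i => ∑ j, |W i j|))
        (Finset.univ.sup' (Finset.univ_nonempty_iff.mpr (Fin.pos_iff_nonempty.mp hn)) (fun j => ∑ i, |W i j|)) :=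
      le_trans (le_max_right _ _) hnorm
    have h5 := le_max_right
      (Finset.univ.sup' (Finset.univ_nonempty_iff.mpr (Fin.pos_iff_nonempty.mp hn)) (fun i => ∑ j, |W i j|))
      (Finset.univ.sup' (Finset.univ_nonempty_iff.mpr (Fin.pos_iff_nonempty.mp hn)) (fun j => ∑ i, |W i j|))
    linarith
  have hf0 : ∀ h : ℝ, f 0 h = Cc * (h*β - h^2*γ) / (1 - lam - h*γ) := by
    intro h; rw [hf]; ring_nf
  refine ⟨?_, ?_, ?_⟩
  · -- case qt01 ≥ 0 : NE is (0,1)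
    intro hq01
    have hq01' : 0 ≤ (γ - 0)*γ + (β - 2*γ)*(1 - lam) := by rw [hqt01] at hq01; exact hq01
    rw [hisNE]
    refine ⟨⟨le_refl 0, le_refl 0⟩, ⟨zero_le_one, le_refl 1⟩, ?_, ?_⟩
    · intro h hh
      obtain ⟨hh0, hh1⟩ := hh
      rw [hf0, hf0]
      rw [div_le_div_iff₀ (by nlinarith) (by nlinarith)]
      nlinarith [mul_nonneg (mul_nonneg hCcpos.le (sub_nonneg.mpr hh1)) hq01',
        mul_nonneg (mul_nonneg (mul_nonneg hCcpos.le hγpos.le) (sq_nonneg (1-h)))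
          (by nlinarith : (0:ℝ) ≤ (1-lam) - γ)]
    · intro g hg
      have hg0 : g = 0 := le_antisymm hg.2 hg.1
      rw [hg0]
  · -- case qt00 ≤ 0 : vacuous
    intro hq00
    exfalso
    have : β - β*lam - 0*γ ≤ 0 := by rw [hqt00] at hq00; exact hq00
    nlinarith
  · -- case qt01 < 0 and qt00 > 0 : NE is (0, rt0)
    intro hq01 _hq00
    have hq01' : (γ - 0)*γ + (β - 2*γ)*(1 - lam) < 0 := by rw [hqt01] at hq01; exact hq01
    set sq := Real.sqrt ((1-lam)*(1-lam-β) + 0*γ) with hsqdef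
    have hargnn : (0:ℝ) ≤ (1-lam)*(1-lam-β) + 0*γ := by nlinarith
    have hsq2 : sq^2 = (1-lam)*(1-lam-β) := by
      rw [hsqdef, Real.sq_sqrt hargnn]; ring
    have hsqnn : 0 ≤ sq := Real.sqrt_nonneg _
    have hsqpos : 0 < sq := Real.sqrt_pos.mpr (by nlinarith)
    have hγr : γ * rt0 = (1-lam) - sq := by
      rw [hrt0]; field_simp
    have hNr : γ^2*rt0^2 - 2*γ*(1-lam)*rt0 + β*(1-lam) = 0 := by
      linear_combination (γ*rt0 - (1-lam) - sq) * hγr + hsq2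
    have hsqle : sq ≤ 1 - lam := by nlinarith [hsq2, hsqnn]
    have hsqge : (1-lam) - γ ≤ sq := by
      nlinarith [hsq2, hsqnn, mul_pos hsqpos hsqpos, sq_nonneg ((1-lam) - γ - sq)]
    have hr0 : 0 ≤ rt0 := by nlinarith [hγr, hsqle]
    have hr1 : rt0 ≤ 1 := by nlinarith [hγr, hsqge]
    have hdr : 0 < 1 - lam - rt0*γ := by nlinarith [hγr]
    have hid : ∀ h : ℝ, Cc*(rt0*β - rt0^2*γ)*(1 - lam - h*γ)
        - Cc*(h*β - h^2*γ)*(1 - lam - rt0*γ)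
        = Cc*γ*((1-lam) - γ*rt0)*(rt0-h)^2 := by
      intro h
      linear_combination (Cc*(rt0 - h)) * hNr
    rw [hisNE]
    refine ⟨⟨le_refl 0, le_refl 0⟩, ⟨hr0, hr1⟩, ?_, ?_⟩
    · intro h hh
      obtain ⟨hh0, hh1⟩ := hh
      rw [hf0, hf0]
      rw [div_le_div_iff₀ (by nlinarith) hdr]
      nlinarith [hid h,
        mul_nonneg (mul_nonneg (mul_nonneg hCcpos.le hγpos.le) (by nlinarith [hγr] : (0:ℝ) ≤ (1-lam) - γ*rt0)) (sq_nonneg (rt0-h))]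
    · intro g hg
      have hg0 : g = 0 := le_antisymm hg.2 hg.1
      rw [hg0]
end

section
/- Assume in addition that γ > 0 and sᵢ = 1 for every i (so s̲ = s̄ = 1, the strategy set of the first player is [0, 1], and that of the second player is {1}). Define m̂(1,1) = χγ + β − βλ − λγ, m̂(0,1) = β − λβ + (λ + γ + χ − 2)γ, and ŵ(1) = (λ + γ − 1 + √(1 − β + (λ + γ + β − 2)λ − χγ))/γ. Then: if m̂(0,1) ≥ 0, the pair (0, 1) is a pure Nash equilibrium; if m̂(1,1) ≤ 0, the pair (1, 1) is a pure Nash equilibrium; otherwise the pair (ŵ(1), 1) is a pure Nash equilibrium. (Corollary 5.) -/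
set_option maxHeartbeats 1000000 in
theorem stmt_19
    (n : ℕ) (hn : 1 ≤ n)
    (W : Matrix (Fin n) (Fin n) ℝ) (hW : ∀ i j, 0 ≤ W i j)
    (c : Fin n → ℝ) (hc : ∀ i, 0 < c i)
    (lam : ℝ) (hlam0 : 0 ≤ lam) (hlam1 : lam < 1)
    (hWc : W.transpose.mulVec c = lam • c)
    (s : Fin n → ℝ) (hs : ∀ i, s i ∈ Set.Icc (0:ℝ) 1)
    (β γ : ℝ) (hγ0 : 0 ≤ γ) (hγβ : γ ≤ β)
    (hnorm : max (2*β) (4*γ) ≤ 1 -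
      max (Finset.univ.sup' (Finset.univ_nonempty_iff.mpr (Fin.pos_iff_nonempty.mp hn)) (fun i => ∑ j, |W i j|))
          (Finset.univ.sup' (Finset.univ_nonempty_iff.mpr (Fin.pos_iff_nonempty.mp hn)) (fun j => ∑ i, |W i j|)))
    (slo shi : ℝ)
    (hslo : slo = Finset.univ.inf' (Finset.univ_nonempty_iff.mpr (Fin.pos_iff_nonempty.mp hn)) s)
    (hshi : shi = Finset.univ.sup' (Finset.univ_nonempty_iff.mpr (Fin.pos_iff_nonempty.mp hn)) s)
    (Cc shat chi : ℝ)
    (hCc : Cc = ∑ i, c i)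
    (hshat : shat = ∑ i, (c i / Cc) * s i)
    (hchi : chi = ∑ i, (c i / Cc) * s i * (∑ j, W i j))
    (f : ℝ → ℝ → ℝ)
    (hf : ∀ g h, f g h = Cc * ((1 - 2*β + (h - g)*γ)*shat - chi + (h + g)*β + (g^2 - h^2)*γ)
        / (1 - lam + (g - h)*γ))
    (isNE : ℝ → ℝ → Prop)
    (hisNE : ∀ a b, isNE a b ↔ (a ∈ Set.Icc (0:ℝ) slo ∧ b ∈ Set.Icc shi 1 ∧
      (∀ h ∈ Set.Icc shi 1, f a h ≤ f a b) ∧ (∀ g ∈ Set.Icc (0:ℝ) slo, f a b ≤ f g b)))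
    (hγpos : 0 < γ) (hone : ∀ i, s i = 1)
    (mh11 mh01 wh1 : ℝ)
    (hmh11 : mh11 = chi*γ + β - β*lam - lam*γ)
    (hmh01 : mh01 = β - lam*β + (lam + γ + chi - 2)*γ)
    (hwh1 : wh1 = (lam + γ - 1 + Real.sqrt (1 - β + (lam + γ + β - 2)*lam - chi*γ)) / γ) :
    (0 ≤ mh01 → isNE 0 1) ∧
    (mh11 ≤ 0 → isNE 1 1) ∧
    (mh01 < 0 → 0 < mh11 → isNE wh1 1) := by
  have hne : (Finset.univ : Finset (Fin n)).Nonempty :=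
    Finset.univ_nonempty_iff.mpr (Fin.pos_iff_nonempty.mp hn)
  have hCcpos : 0 < Cc := by
    rw [hCc]; exact Finset.sum_pos (fun i _ => hc i) hne
  have hsone : s = fun _ => (1:ℝ) := funext hone
  have hslo1 : slo = 1 := by rw [hslo, hsone]; exact Finset.inf'_const _ _
  have hshi1 : shi = 1 := by rw [hshi, hsone]; exact Finset.sup'_const _ _
  have hshat1 : shat = 1 := by
    rw [hshat]
    simp only [hone, mul_one]
    rw [← Finset.sum_div, ← hCc, div_self hCcpos.ne']
  have hsum : ∑ i, c i * (∑ j, W i j) = lam * Cc := by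
    calc ∑ i, c i * (∑ j, W i j) = ∑ i, ∑ j, W i j * c i := by
          refine Finset.sum_congr rfl fun i _ => ?_
          rw [Finset.mul_sum]
          exact Finset.sum_congr rfl fun j _ => mul_comm _ _
      _ = ∑ j, ∑ i, W i j * c i := Finset.sum_comm
      _ = ∑ j, lam * c j := by
          refine Finset.sum_congr rfl fun j _ => ?_
          have h := congrFun hWc j
          simpa [Matrix.mulVec, dotProduct, Matrix.transpose_apply] using h
      _ = lam * Cc := by rw [← Finset.mul_sum, hCc]
  have hchil : chi = lam := by
    rw [hchi]
    have h1 : ∑ i, (c i / Cc) * s i * (∑ j, W i j) = (∑ i, c i * (∑ j, W i j)) / Cc := by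
      rw [Finset.sum_div]
      refine Finset.sum_congr rfl fun i _ => ?_
      rw [hone i]; ring
    rw [h1, hsum]
    field_simp
  -- lam ≤ K where K is the sup of row sums
  have hlamK : lam ≤ Finset.univ.sup' (Finset.univ_nonempty_iff.mpr (Fin.pos_iff_nonempty.mp hn)) (fun i => ∑ j, |W i j|) := by
    set K := Finset.univ.sup' (Finset.univ_nonempty_iff.mpr (Fin.pos_iff_nonempty.mp hn)) (fun i => ∑ j, |W i j|) with hKdef
    have h1 : lam * Cc ≤ K * Cc := by
      rw [← hsum]
      calc ∑ i, c i * (∑ j, W i j) ≤ ∑ i, c i * K := by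
            refine Finset.sum_le_sum fun i _ => ?_
            refine mul_le_mul_of_nonneg_left ?_ (hc i).le
            calc ∑ j, W i j ≤ ∑ j, |W i j| :=
                  Finset.sum_le_sum fun j _ => le_abs_self _
              _ ≤ K := by
                  rw [hKdef]
                  exact Finset.le_sup' (fun i => ∑ j, |W i j|) (Finset.mem_univ i)
        _ = K * Cc := by rw [← Finset.sum_mul, ← hCc, mul_comm]
    exact le_of_mul_le_mul_right h1 hCcpos
  have hlam4 : lam ≤ 1 - 4*γ := by
    have h2 := le_trans (le_max_right (2*β) (4*γ)) hnorm
    have h3 := le_max_left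
      (Finset.univ.sup' (Finset.univ_nonempty_iff.mpr (Fin.pos_iff_nonempty.mp hn)) (fun i => ∑ j, |W i j|))
      (Finset.univ.sup' (Finset.univ_nonempty_iff.mpr (Fin.pos_iff_nonempty.mp hn)) (fun j => ∑ i, |W i j|))
    linarith
  have hlam2β : lam + 2*β ≤ 1 := by
    have h2 := le_trans (le_max_left (2*β) (4*γ)) hnorm
    have h3 := le_max_left
      (Finset.univ.sup' (Finset.univ_nonempty_iff.mpr (Fin.pos_iff_nonempty.mp hn)) (fun i => ∑ j, |W i j|))
      (Finset.univ.sup' (Finset.univ_nonempty_iff.mpr (Fin.pos_iff_nonempty.mp hn)) (fun j => ∑ i, |W i j|))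
    linarith
  have he : 0 < 1 - lam - γ := by linarith
  have hβpos : 0 < β := lt_of_lt_of_le hγpos hγβ
  have hf1 : ∀ g : ℝ, f g 1 = Cc * (γ*g^2 + (β-γ)*g + (1-β-lam)) / ((1-lam-γ) + γ*g) := by
    intro g
    rw [hf, hshat1, hchil]
    ring_nf
  have hD : ∀ g : ℝ, 0 ≤ g → 0 < (1-lam-γ) + γ*g := by
    intro g hg
    nlinarith [mul_nonneg hγpos.le hg]
  have hm0' : mh01 = β - lam*β + (lam + γ + lam - 2)*γ := by rw [hmh01, hchil]
  refine ⟨?_, ?_, ?_⟩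
  · -- case (0,1)
    intro hm0
    rw [hisNE]
    refine ⟨⟨le_rfl, by rw [hslo1]; norm_num⟩, ⟨hshi1.le, le_rfl⟩, ?_, ?_⟩
    · intro h hh
      have h1 : h = 1 := le_antisymm hh.2 (by rw [hshi1] at hh; exact hh.1)
      rw [h1]
    · intro g hg
      have hg0 : 0 ≤ g := hg.1
      rw [hf1, hf1, div_le_div_iff₀ (hD 0 le_rfl) (hD g hg0)]
      have hB : (0:ℝ) ≤ γ*(1-lam-γ)*g + (β - lam*β + (lam + γ + lam - 2)*γ) := by
        have hp : (0:ℝ) ≤ γ*(1-lam-γ)*g := mul_nonneg (mul_nonneg hγpos.le he.le) hg0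
        linarith [hp, hm0, hm0']
      have hdiff : Cc * (γ*g^2 + (β-γ)*g + (1-β-lam)) * ((1-lam-γ) + γ*0)
          - Cc * (γ*0^2 + (β-γ)*0 + (1-β-lam)) * ((1-lam-γ) + γ*g)
          = Cc*g*(γ*(1-lam-γ)*g + (β - lam*β + (lam + γ + lam - 2)*γ)) := by ring
      linarith [hdiff, mul_nonneg (mul_nonneg hCcpos.le hg0) hB]
  · -- case (1,1): vacuous
    intro hm11
    exfalso
    rw [hmh11, hchil] at hm11
    linarith [mul_pos hβpos (show (0:ℝ) < 1 - lam by linarith)]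
  · -- case (wh1, 1)
    intro hm0 hm11
    have hΔexpr : 1 - β + (lam + γ + β - 2)*lam - chi*γ = (1-lam)*(1-lam-β) := by
      rw [hchil]; ring
    set r := Real.sqrt (1 - β + (lam + γ + β - 2)*lam - chi*γ) with hrdef
    have hr0 : 0 ≤ r := Real.sqrt_nonneg _
    have hΔpos : 0 ≤ 1 - β + (lam + γ + β - 2)*lam - chi*γ := by
      rw [hΔexpr]
      have h5 : 0 < 1 - lam - β := by linarith
      exact le_of_lt (mul_pos (by linarith) h5)
    have hr2 : r^2 = (1-lam)*(1-lam-β) := by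
      rw [hrdef, Real.sq_sqrt hΔpos, hΔexpr]
    have hq : γ * wh1 = lam + γ - 1 + r := by
      rw [hwh1]; field_simp
    have h6 : (1-lam-γ)^2 = r^2 + mh01 := by
      linear_combination (-1)*hr2 + (-1)*hm0'
    have h7 : (1-lam-γ)^2 < r^2 := by linarith
    have hrgt : 1 - lam - γ < r := lt_of_pow_lt_pow_left₀ 2 hr0 h7
    have h8 : r^2 < (1-lam)^2 := by
      have h9 : (1-lam)^2 - r^2 = (1-lam)*β := by linear_combination (-1)*hr2
      linarith [mul_pos (show (0:ℝ) < 1-lam by linarith) hβpos]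
    have hrlt : r < 1 - lam := lt_of_pow_lt_pow_left₀ 2 (by linarith) h8
    have ha0 : 0 < wh1 := by
      rw [hwh1]
      exact div_pos (by linarith) hγpos
    have ha1 : wh1 ≤ 1 := by
      rw [hwh1, div_le_one hγpos]
      linarith
    have hma : γ^2*wh1^2 + 2*γ*(1-lam-γ)*wh1 + (β - lam*β + (lam + γ + lam - 2)*γ) = 0 := by
      linear_combination (γ*wh1 + (lam + γ - 1 + r) + 2*(1-lam-γ)) * hq + hr2
    rw [hisNE]
    refine ⟨⟨ha0.le, by rw [hslo1]; exact ha1⟩, ⟨hshi1.le, le_rfl⟩, ?_, ?_⟩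
    · intro h hh
      have h1 : h = 1 := le_antisymm hh.2 (by rw [hshi1] at hh; exact hh.1)
      rw [h1]
    · intro g hg
      have hg0 : 0 ≤ g := hg.1
      rw [hf1, hf1, div_le_div_iff₀ (hD wh1 ha0.le) (hD g hg0)]
      have hdiff : Cc*(γ*g^2+(β-γ)*g+(1-β-lam))*((1-lam-γ)+γ*wh1)
          - Cc*(γ*wh1^2+(β-γ)*wh1+(1-β-lam))*((1-lam-γ)+γ*g)
          = Cc*(g-wh1)^2*(γ*((1-lam-γ)+γ*wh1)) := by
        linear_combination (Cc*(g-wh1)) * hma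
      have hpos : 0 ≤ Cc*(g-wh1)^2*(γ*((1-lam-γ)+γ*wh1)) :=
        mul_nonneg (mul_nonneg hCcpos.le (sq_nonneg _))
          (mul_nonneg hγpos.le (hD wh1 ha0.le).le)
      linarith
end
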